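/- arXiv:1203.0513 — 3 statements merged into one kernel-verified Lean document; each statement's English description precedes it below -/
import Mathlib

section
/- Suppose g : [0,1] → ℝ is piecewise C², belongs to H¹, satisfies K(g,θ) ≥ 0 for all θ ∈ [0,1], and achieves K(g,1) = sup{ K(f,1) : f piecewise C², f ∈ H¹, K(f,θ) ≥ 0 for all θ ∈ [0,1] }. Then the left derivative of g at 1 equals 0. -/
open MeasureTheory Set

/-- `f ∈ H¹`: `f(t) = ∫₀ᵗ g(s) ds` on `[0,1]` for some `g ∈ L²[0,1]`. -/
def InH1 (f : ℝ → ℝ) : Prop :=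
  ∃ g : ℝ → ℝ, MemLp g 2 (volume.restrict (Icc (0:ℝ) 1)) ∧
    ∀ t ∈ Icc (0:ℝ) 1, f t = ∫ s in (0:ℝ)..t, g s

/-- `K(f,t) = ∫₀ᵗ ( mβ|f(s)|ᵖ − ½ f′(s)² ) ds`, the derivative taken within `[0,1]`. -/
noncomputable def K (m β p : ℝ) (f : ℝ → ℝ) (t : ℝ) : ℝ :=
  ∫ s in (0:ℝ)..t,
    (m * β * |f s| ^ p - (1/2) * (derivWithin f (Icc (0:ℝ) 1) s) ^ 2)

/-- `g` is piecewise `C²` on `[0,1]`: there are `0 = x₀ < x₁ < ⋯ < x_K = 1` such that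
`g` is twice continuously differentiable on each `[xᵢ, xᵢ₊₁]`. -/
def PiecewiseC2 (g : ℝ → ℝ) : Prop :=
  ∃ (n : ℕ) (x : Fin (n + 1) → ℝ), x 0 = 0 ∧ x (Fin.last n) = 1 ∧ StrictMono x ∧
    ∀ i : Fin n, ContDiffOn ℝ 2 g (Icc (x i.castSucc) (x i.succ))

namespace Stmt2Aux

lemma xnonneg {n : ℕ} {x : Fin (n+1) → ℝ} (hx0 : x 0 = 0) (hsm : StrictMono x)
    (j : Fin (n+1)) : 0 ≤ x j := by
  rw [← hx0]; exact hsm.monotone (Fin.zero_le j)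

lemma xle1 {n : ℕ} {x : Fin (n+1) → ℝ} (hxl : x (Fin.last n) = 1) (hsm : StrictMono x)
    (j : Fin (n+1)) : x j ≤ 1 := by
  rw [← hxl]; exact hsm.monotone (Fin.le_last j)

lemma pw_integrable {f : ℝ → ℝ} (hpc : PiecewiseC2 f) (Φ : ℝ → ℝ → ℝ)
    (hΦ : Continuous fun q : ℝ × ℝ => Φ q.1 q.2) :
    IntervalIntegrable (fun s => Φ (f s) (derivWithin f (Icc (0:ℝ) 1) s)) volume 0 1 := by
  obtain ⟨n, x, hx0, hxl, hsm, hcd⟩ := hpc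
  set F := fun s => Φ (f s) (derivWithin f (Icc (0:ℝ) 1) s) with hF
  have piece : ∀ i : Fin n, IntervalIntegrable F volume (x i.castSucc) (x i.succ) := by
    intro i
    have hab : x i.castSucc < x i.succ := hsm Fin.castSucc_lt_succ
    have ha0 : 0 ≤ x i.castSucc := xnonneg hx0 hsm _
    have hb1 : x i.succ ≤ 1 := xle1 hxl hsm _
    have hFc : ContinuousOn (fun s => Φ (f s) (derivWithin f (Icc (x i.castSucc) (x i.succ)) s))
        (Icc (x i.castSucc) (x i.succ)) := by
      have h1 : ContinuousOn f (Icc (x i.castSucc) (x i.succ)) := (hcd i).continuousOn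
      have h2 : ContinuousOn (derivWithin f (Icc (x i.castSucc) (x i.succ)))
          (Icc (x i.castSucc) (x i.succ)) :=
        (hcd i).continuousOn_derivWithin (uniqueDiffOn_Icc hab) one_le_two
      exact hΦ.comp_continuousOn (h1.prodMk h2)
    have hInt : IntegrableOn (fun s => Φ (f s) (derivWithin f (Icc (x i.castSucc) (x i.succ)) s))
        (Ioc (x i.castSucc) (x i.succ)) volume :=
      hFc.integrableOn_Icc.mono_set Ioc_subset_Icc_self
    rw [intervalIntegrable_iff, uIoc_of_le hab.le]
    refine hInt.congr ?_
    have hres : volume.restrict (Ioc (x i.castSucc) (x i.succ))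
        = volume.restrict (Ioo (x i.castSucc) (x i.succ)) :=
      (Measure.restrict_congr_set Ioo_ae_eq_Ioc).symm
    rw [hres]
    filter_upwards [ae_restrict_mem measurableSet_Ioo] with s hs
    have h1 : Icc (x i.castSucc) (x i.succ) ∈ nhds s := Icc_mem_nhds hs.1 hs.2
    have h2 : Icc (0:ℝ) 1 ∈ nhds s := Icc_mem_nhds (ha0.trans_lt hs.1) (hs.2.trans_le hb1)
    simp only [hF]
    rw [derivWithin_of_mem_nhds h1, derivWithin_of_mem_nhds h2]
  have glue : ∀ k : ℕ, ∀ hk : k ≤ n,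
      IntervalIntegrable F volume 0 (x ⟨k, Nat.lt_succ_of_le hk⟩) := by
    intro k
    induction k with
    | zero =>
      intro hk
      have h00 : x ⟨0, Nat.lt_succ_of_le hk⟩ = 0 := by
        have : (⟨0, Nat.lt_succ_of_le hk⟩ : Fin (n+1)) = 0 := rfl
        rw [this, hx0]
      rw [h00]
    | succ k ih =>
      intro hk
      have hk' : k ≤ n := Nat.le_of_succ_le hk
      have hpiece : IntervalIntegrable F volume (x ⟨k, Nat.lt_succ_of_le hk'⟩)
          (x ⟨k+1, Nat.lt_succ_of_le hk⟩) := piece ⟨k, hk⟩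
      exact (ih hk').trans hpiece
  have hlast := glue n le_rfl
  have h1 : x ⟨n, Nat.lt_succ_of_le le_rfl⟩ = 1 := by
    have : (⟨n, Nat.lt_succ_of_le le_rfl⟩ : Fin (n+1)) = Fin.last n := rfl
    rw [this, hxl]
  rwa [h1] at hlast

lemma interval_int_sub {f : ℝ → ℝ} (hint : IntervalIntegrable f volume 0 1)
    {u v : ℝ} (hu : u ∈ Icc (0:ℝ) 1) (hv : v ∈ Icc (0:ℝ) 1) :
    IntervalIntegrable f volume u v := by
  refine hint.mono_set ?_
  rw [uIcc_of_le (zero_le_one)]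
  exact uIcc_subset_Icc hu hv

lemma pw_ftc {f : ℝ → ℝ} (hpc : PiecewiseC2 f) (h0 : f 0 = 0) :
    ∀ t ∈ Icc (0:ℝ) 1, f t = ∫ s in (0:ℝ)..t, derivWithin f (Icc (0:ℝ) 1) s := by
  have hint : IntervalIntegrable (fun s => derivWithin f (Icc (0:ℝ) 1) s) volume 0 1 :=
    pw_integrable hpc (fun _ v => v) continuous_snd
  obtain ⟨n, x, hx0, hxl, hsm, hcd⟩ := hpc
  set D := fun s => derivWithin f (Icc (0:ℝ) 1) s with hD
  have pieceFTC : ∀ i : Fin n, ∀ t ∈ Icc (x i.castSucc) (x i.succ),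
      f t = f (x i.castSucc) + ∫ s in (x i.castSucc)..t, D s := by
    intro i t ht
    have hab : x i.castSucc < x i.succ := hsm Fin.castSucc_lt_succ
    have ha0 : 0 ≤ x i.castSucc := xnonneg hx0 hsm _
    have hb1 : x i.succ ≤ 1 := xle1 hxl hsm _
    have h1 : ∫ s in (x i.castSucc)..t, D s = f t - f (x i.castSucc) := by
      apply intervalIntegral.integral_eq_sub_of_hasDeriv_right_of_le ht.1
      · exact (hcd i).continuousOn.mono (Icc_subset_Icc le_rfl ht.2)
      · intro s hs
        have hsI : s ∈ Ioo (x i.castSucc) (x i.succ) := ⟨hs.1, lt_of_lt_of_le hs.2 ht.2⟩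
        have hd : DifferentiableAt ℝ f s :=
          (((hcd i).differentiableOn two_ne_zero) s (Ioo_subset_Icc_self hsI)).differentiableAt
            (Icc_mem_nhds hsI.1 hsI.2)
        have hDs : D s = deriv f s :=
          derivWithin_of_mem_nhds (Icc_mem_nhds (ha0.trans_lt hsI.1) (hsI.2.trans_le hb1))
        rw [hDs]
        exact hd.hasDerivAt.hasDerivWithinAt
      · exact interval_int_sub hint ⟨ha0, hab.le.trans hb1⟩
          ⟨ha0.trans ht.1, ht.2.trans hb1⟩
    rw [h1]; ring
  have main : ∀ k : ℕ, ∀ hk : k ≤ n, ∀ t ∈ Icc (0:ℝ) (x ⟨k, Nat.lt_succ_of_le hk⟩),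
      f t = ∫ s in (0:ℝ)..t, D s := by
    intro k
    induction k with
    | zero =>
      intro hk t ht
      have h00 : x ⟨0, Nat.lt_succ_of_le hk⟩ = 0 := by
        have : (⟨0, Nat.lt_succ_of_le hk⟩ : Fin (n+1)) = 0 := rfl
        rw [this, hx0]
      have ht0 : t = 0 := le_antisymm (h00 ▸ ht.2) ht.1
      rw [ht0, intervalIntegral.integral_same, h0]
    | succ k ih =>
      intro hk t ht
      have hk' : k ≤ n := Nat.le_of_succ_le hk
      by_cases hcase : t ≤ x ⟨k, Nat.lt_succ_of_le hk'⟩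
      · exact ih hk' t ⟨ht.1, hcase⟩
      · push_neg at hcase
        have hxk0 : 0 ≤ x ⟨k, Nat.lt_succ_of_le hk'⟩ := xnonneg hx0 hsm _
        have hxk1 : x ⟨k, Nat.lt_succ_of_le hk'⟩ ≤ 1 := xle1 hxl hsm _
        have ht1 : t ≤ 1 := ht.2.trans (xle1 hxl hsm _)
        have hT := pieceFTC ⟨k, hk⟩ t ⟨hcase.le, ht.2⟩
        simp only [Fin.castSucc_mk, Fin.succ_mk] at hT
        have hA := ih hk' (x ⟨k, Nat.lt_succ_of_le hk'⟩) ⟨hxk0, le_rfl⟩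
        rw [hT, hA]
        exact intervalIntegral.integral_add_adjacent_intervals
          (interval_int_sub hint (left_mem_Icc.2 zero_le_one) ⟨hxk0, hxk1⟩)
          (interval_int_sub hint ⟨hxk0, hxk1⟩ ⟨ht.1, ht1⟩)
  intro t ht
  have h1 : x ⟨n, Nat.lt_succ_of_le le_rfl⟩ = 1 := by
    have : (⟨n, Nat.lt_succ_of_le le_rfl⟩ : Fin (n+1)) = Fin.last n := rfl
    rw [this, hxl]
  exact main n le_rfl t (by rw [h1]; exact ht)

lemma cs_aux {F : ℝ → ℝ} (h1 : IntervalIntegrable (fun s => |F s|) volume 0 1)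
    (h2 : IntervalIntegrable (fun s => (F s)^2) volume 0 1) :
    (∫ s in (0:ℝ)..1, |F s|) ^ 2 ≤ ∫ s in (0:ℝ)..1, (F s)^2 := by
  set μ := volume.restrict (Ioc (0:ℝ) 1) with hμ
  haveI : IsFiniteMeasure μ := ⟨by simp [hμ, Real.volume_Ioc]⟩
  have hμ1 : (μ univ).toReal = 1 := by simp [hμ, Real.volume_Ioc]
  have hai : Integrable (fun s => |F s|) μ := by
    rw [intervalIntegrable_iff, uIoc_of_le zero_le_one] at h1; exact h1
  have hsi : Integrable (fun s => (F s)^2) μ := by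
    rw [intervalIntegrable_iff, uIoc_of_le zero_le_one] at h2; exact h2
  have heq1 : ∫ s in (0:ℝ)..1, |F s| = ∫ s, |F s| ∂μ :=
    intervalIntegral.integral_of_le zero_le_one
  have heq2 : ∫ s in (0:ℝ)..1, (F s)^2 = ∫ s, (F s)^2 ∂μ :=
    intervalIntegral.integral_of_le zero_le_one
  rw [heq1, heq2]
  set c := ∫ s, |F s| ∂μ with hc
  have key : 0 ≤ ∫ s, (|F s| - c)^2 ∂μ := integral_nonneg (fun s => sq_nonneg _)
  have expand : ∫ s, (|F s| - c)^2 ∂μ = (∫ s, (F s)^2 ∂μ) - (2*c)*c + c^2 := by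
    have hfe : (fun s => (|F s| - c)^2) = fun s => ((F s)^2 - (2*c) * |F s|) + c^2 := by
      funext s; rw [sub_sq, sq_abs]; ring
    have hcm : Integrable (fun s => (2*c) * |F s|) μ := hai.const_mul (2*c)
    have hfa : Integrable (fun s => F s ^ 2 - (2*c) * |F s|) μ := hsi.sub hcm
    rw [hfe, integral_add hfa (integrable_const _),
      integral_sub hsi hcm, MeasureTheory.integral_const_mul, integral_const, measureReal_def, hμ1, ← hc]
    simp
  rw [expand] at key
  nlinarith [key]

lemma K_le (m β p : ℝ) (hm : 0 < m) (hβ : 0 < β) (hp0 : 0 ≤ p) (hp2 : p < 2)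
    {f : ℝ → ℝ} (hpc : PiecewiseC2 f) (h0 : f 0 = 0) :
    K m β p f 1 ≤ m * β * (max 1 ((2*m*β) ^ (1/(2-p)))) ^ p := by
  have hmβ : 0 < m * β := mul_pos hm hβ
  have hrpc : Continuous fun v : ℝ => v ^ p :=
    continuous_iff_continuousAt.2 fun x => Real.continuousAt_rpow_const x p (Or.inr hp0)
  set D := fun s => derivWithin f (Icc (0:ℝ) 1) s with hD
  have hiA : IntervalIntegrable (fun s => |D s|) volume 0 1 :=
    pw_integrable hpc (fun _ v => |v|) continuous_snd.abs
  have hiS : IntervalIntegrable (fun s => (D s)^2) volume 0 1 :=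
    pw_integrable hpc (fun _ v => v^2) (continuous_snd.pow 2)
  have hiP : IntervalIntegrable (fun s => |f s| ^ p) volume 0 1 :=
    pw_integrable hpc (fun u _ => |u| ^ p) (hrpc.comp continuous_fst.abs)
  set I2 := ∫ s in (0:ℝ)..1, (D s)^2 with hI2
  set I1 := ∫ s in (0:ℝ)..1, |D s| with hI1
  have hI2nn : 0 ≤ I2 := intervalIntegral.integral_nonneg zero_le_one (fun s _ => sq_nonneg _)
  have hI1nn : 0 ≤ I1 := intervalIntegral.integral_nonneg zero_le_one (fun s _ => abs_nonneg _)
  set E := Real.sqrt I2 with hE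
  have hE0 : 0 ≤ E := Real.sqrt_nonneg _
  have hE2 : E ^ 2 = I2 := Real.sq_sqrt hI2nn
  have hIE : I1 ≤ E := (Real.le_sqrt hI1nn hI2nn).2 (cs_aux hiA hiS)
  have hfb : ∀ t ∈ Icc (0:ℝ) 1, |f t| ≤ E := by
    intro t ht
    rw [pw_ftc hpc h0 t ht]
    calc |∫ s in (0:ℝ)..t, D s| ≤ ∫ s in (0:ℝ)..t, |D s| :=
          intervalIntegral.abs_integral_le_integral_abs ht.1
      _ ≤ I1 := intervalIntegral.integral_mono_interval le_rfl ht.1 ht.2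
          (Filter.Eventually.of_forall fun s => abs_nonneg _) hiA
      _ ≤ E := hIE
  have hKsplit : K m β p f 1 = m * β * (∫ s in (0:ℝ)..1, |f s| ^ p) - (1/2) * I2 := by
    rw [K]
    rw [intervalIntegral.integral_sub ((hiP.const_mul (m*β))) (hiS.const_mul (1/2)),
      intervalIntegral.integral_const_mul, intervalIntegral.integral_const_mul]
  have hIp : (∫ s in (0:ℝ)..1, |f s| ^ p) ≤ E ^ p := by
    have h1 : (∫ s in (0:ℝ)..1, |f s| ^ p) ≤ ∫ s in (0:ℝ)..1, E ^ p := by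
      refine intervalIntegral.integral_mono_on zero_le_one hiP intervalIntegrable_const ?_
      exact fun s hs => Real.rpow_le_rpow (abs_nonneg _) (hfb s hs) hp0
    simpa using h1
  set R := max 1 ((2*m*β) ^ (1/(2-p))) with hR
  have hR1 : (1:ℝ) ≤ R := le_max_left _ _
  have hR0 : (0:ℝ) < R := lt_of_lt_of_le one_pos hR1
  have hp2' : (0:ℝ) < 2 - p := by linarith
  have h2mβ : (0:ℝ) < 2*m*β := by nlinarith
  have hRpow : 2*m*β ≤ R ^ (2-p) := by
    have h1 : ((2*m*β) ^ (1/(2-p))) ^ (2-p) ≤ R ^ (2-p) :=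
      Real.rpow_le_rpow (Real.rpow_nonneg h2mβ.le _) (le_max_right _ _) hp2'.le
    rwa [← Real.rpow_mul h2mβ.le, one_div_mul_cancel (ne_of_gt hp2'), Real.rpow_one] at h1
  have hRkey : m*β*R^(p-2) ≤ 1/2 := by
    have hRp2 : R ^ (p-2) = (R ^ (2-p))⁻¹ := by
      rw [show p - 2 = -(2-p) by ring, Real.rpow_neg hR0.le]
    have hinv : (R ^ (2-p))⁻¹ ≤ (2*m*β)⁻¹ := inv_anti₀ h2mβ hRpow
    calc m*β*R^(p-2) = m*β*(R^(2-p))⁻¹ := by rw [hRp2]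
      _ ≤ m*β*(2*m*β)⁻¹ := mul_le_mul_of_nonneg_left hinv hmβ.le
      _ = 1/2 := by field_simp
  have hRpnn : (0:ℝ) ≤ m * β * R ^ p := by positivity
  rcases le_or_gt E R with hER | hRE
  · have h1 : E ^ p ≤ R ^ p := Real.rpow_le_rpow hE0 hER hp0
    have h2 : m * β * (∫ s in (0:ℝ)..1, |f s| ^ p) ≤ m * β * R ^ p :=
      mul_le_mul_of_nonneg_left (hIp.trans h1) hmβ.le
    have h3 : 0 ≤ (1/2) * I2 := by linarith
    linarith [hKsplit]
  · have hEpos : 0 < E := hR0.trans hRE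
    have hsplit : E ^ p = E ^ (p-2) * E ^ 2 := by
      calc E ^ p = E ^ ((p-2)+2) := by norm_num
        _ = E ^ (p-2) * E ^ (2:ℝ) := Real.rpow_add hEpos _ _
        _ = E ^ (p-2) * E ^ 2 := by rw [Real.rpow_two]
    have hle : m * β * E ^ p ≤ (1/2) * E ^ 2 := by
      rw [hsplit]
      have h1 : E ^ (p-2) ≤ R ^ (p-2) :=
        Real.rpow_le_rpow_of_nonpos hR0 hRE.le (by linarith)
      have h2 : m * β * E ^ (p-2) ≤ 1/2 :=
        le_trans (mul_le_mul_of_nonneg_left h1 hmβ.le) hRkey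
      calc m * β * (E ^ (p-2) * E ^ 2) = (m * β * E ^ (p-2)) * E ^ 2 := by ring
        _ ≤ (1/2) * E ^ 2 := mul_le_mul_of_nonneg_right h2 (sq_nonneg _)
    have h2 : m * β * (∫ s in (0:ℝ)..1, |f s| ^ p) ≤ m * β * E ^ p :=
      mul_le_mul_of_nonneg_left hIp hmβ.le
    linarith [hKsplit, hE2]

lemma lag_integrable (m β p : ℝ) (hp0 : 0 ≤ p) {f : ℝ → ℝ} (hpc : PiecewiseC2 f) :
    IntervalIntegrable
      (fun s => m * β * |f s| ^ p - (1/2) * (derivWithin f (Icc (0:ℝ) 1) s) ^ 2) volume 0 1 := by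
  have hrpc : Continuous fun v : ℝ => v ^ p :=
    continuous_iff_continuousAt.2 fun x => Real.continuousAt_rpow_const x p (Or.inr hp0)
  exact pw_integrable hpc (fun u v => m * β * |u| ^ p - (1/2) * v^2)
    ((continuous_const.mul (hrpc.comp continuous_fst.abs)).sub
      (continuous_const.mul (continuous_snd.pow 2)))

lemma piecewiseC2_perturb {g : ℝ → ℝ} {n : ℕ} {x : Fin (n+2) → ℝ}
    (hx0 : x 0 = 0) (hxl : x (Fin.last (n+1)) = 1) (hsm : StrictMono x)
    (hcd : ∀ i : Fin (n+1), ContDiffOn ℝ 2 g (Icc (x i.castSucc) (x i.succ)))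
    {τ : ℝ} (hτ1 : τ < 1) (hbτ : x ⟨n, by omega⟩ < τ)
    {f : ℝ → ℝ} (hfg : ∀ t, t ≤ τ → f t = g t)
    (hf2 : ContDiffOn ℝ 2 f (Icc τ 1)) : PiecewiseC2 f := by
  have hglast : ContDiffOn ℝ 2 g (Icc (x ⟨n, by omega⟩) 1) := by
    have h := hcd (Fin.last n)
    have e1 : (Fin.last n).castSucc = (⟨n, by omega⟩ : Fin (n+2)) := by ext; simp
    have e2 : (Fin.last n).succ = Fin.last (n+1) := by ext; simp
    rwa [e1, e2, hxl] at h
  refine ⟨n+2, fun j : Fin (n+3) =>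
    if h : (j:ℕ) ≤ n then x ⟨(j:ℕ), by omega⟩ else if (j:ℕ) = n+1 then τ else 1,
    ?_, ?_, ?_, ?_⟩
  · beta_reduce
    rw [dif_pos (by simp : ((0 : Fin (n+3)):ℕ) ≤ n)]
    rw [← hx0]
    congr 1
  · beta_reduce
    rw [dif_neg (by simp [Fin.last] : ¬ ((Fin.last (n+2) : Fin (n+3)):ℕ) ≤ n)]
    rw [if_neg (by simp [Fin.last])]
  · rw [Fin.strictMono_iff_lt_succ]
    intro i
    simp only [Fin.coe_castSucc, Fin.val_succ]
    rcases lt_trichotomy ((i:ℕ)+1) (n+1) with h1 | h1 | h1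
    · rw [dif_pos (by omega : (i:ℕ) ≤ n), dif_pos (by omega : (i:ℕ)+1 ≤ n)]
      exact hsm (by simp [Fin.lt_def])
    · rw [dif_pos (by omega : (i:ℕ) ≤ n), dif_neg (by omega : ¬ (i:ℕ)+1 ≤ n),
        if_pos (by omega : (i:ℕ)+1 = n+1)]
      have : x ⟨(i:ℕ), by omega⟩ ≤ x ⟨n, by omega⟩ := hsm.monotone (by simp [Fin.le_def]; omega)
      exact lt_of_le_of_lt this hbτ
    · have hi : (i:ℕ) = n+1 := by have := i.isLt; omega
      rw [dif_neg (by omega), if_pos hi, dif_neg (by omega), if_neg (by omega)]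
      exact hτ1
  · intro i
    simp only [Fin.coe_castSucc, Fin.val_succ]
    rcases lt_trichotomy ((i:ℕ)+1) (n+1) with h1 | h1 | h1
    · rw [dif_pos (by omega : (i:ℕ) ≤ n), dif_pos (by omega : (i:ℕ)+1 ≤ n)]
      have hsub : x ⟨(i:ℕ)+1, by omega⟩ ≤ τ := by
        refine le_trans ?_ hbτ.le
        exact hsm.monotone (by simp [Fin.le_def]; omega)
      refine (hcd ⟨(i:ℕ), by omega⟩).congr ?_
      intro t ht
      have hcc : (⟨(i:ℕ), by omega⟩ : Fin (n+1)).castSucc = (⟨(i:ℕ), by omega⟩ : Fin (n+2)) := by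
        ext; simp
      have hss : (⟨(i:ℕ), by omega⟩ : Fin (n+1)).succ = (⟨(i:ℕ)+1, by omega⟩ : Fin (n+2)) := by
        ext; simp
      rw [hcc, hss] at ht
      exact hfg t (ht.2.trans hsub)
    · rw [dif_pos (by omega : (i:ℕ) ≤ n), dif_neg (by omega : ¬ (i:ℕ)+1 ≤ n),
        if_pos (by omega : (i:ℕ)+1 = n+1)]
      have hin : (i:ℕ) = n := by omega
      have hxeq : x ⟨(i:ℕ), by omega⟩ = x ⟨n, by omega⟩ := by congr 1; ext; simp [hin]
      rw [hxeq]
      refine ((hglast.mono (Icc_subset_Icc le_rfl hτ1.le)).congr ?_)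
      intro t ht
      exact hfg t ht.2
    · have hi : (i:ℕ) = n+1 := by have := i.isLt; omega
      rw [dif_neg (by omega), if_pos hi, dif_neg (by omega), if_neg (by omega)]
      exact hf2

end Stmt2Aux

set_option maxHeartbeats 2000000 in
open Stmt2Aux in
theorem stmt2 (m β p : ℝ) (hm : 0 < m) (hβ : 0 < β) (hp0 : 0 ≤ p) (hp2 : p < 2)
    (g : ℝ → ℝ) (hpc : PiecewiseC2 g) (hH1 : InH1 g)
    (hcon : ∀ θ ∈ Icc (0:ℝ) 1, 0 ≤ K m β p g θ)
    (hmax : K m β p g 1 =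
      sSup {k : ℝ | ∃ f : ℝ → ℝ, PiecewiseC2 f ∧ InH1 f ∧
        (∀ θ ∈ Icc (0:ℝ) 1, 0 ≤ K m β p f θ) ∧ K m β p f 1 = k}) :
    HasDerivWithinAt g 0 (Icc (0:ℝ) 1) 1 := by
  classical
  obtain ⟨n', x, hx0, hxl, hsm, hcd⟩ := hpc
  have hn' : n' ≠ 0 := by
    rintro rfl
    have h01 : (1:ℝ) = 0 := by
      rw [← hxl, ← hx0]
      exact congrArg x (by apply Fin.ext; simp [Fin.last])
    norm_num at h01
  obtain ⟨n, rfl⟩ := Nat.exists_eq_succ_of_ne_zero hn'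
  have hpcg : PiecewiseC2 g := ⟨n+1, x, hx0, hxl, hsm, hcd⟩
  set b := x ⟨n, by omega⟩ with hbdef
  have hglast : ContDiffOn ℝ 2 g (Icc b 1) := by
    have h := hcd (Fin.last n)
    have e1 : (Fin.last n).castSucc = (⟨n, by omega⟩ : Fin (n+2)) := by ext; simp
    have e2 : (Fin.last n).succ = Fin.last (n+1) := by ext; simp
    rwa [e1, e2, hxl] at h
  have hb0 : 0 ≤ b := xnonneg hx0 hsm _
  have hb1 : b < 1 := by
    have h := hsm (show (⟨n, by omega⟩ : Fin (n+2)) < Fin.last (n+1) by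
      simp [Fin.lt_def, Fin.last])
    rwa [hxl] at h
  have hud : UniqueDiffOn ℝ (Icc b 1) := uniqueDiffOn_Icc hb1
  have hgd : DifferentiableWithinAt ℝ g (Icc b 1) 1 :=
    (hglast.differentiableOn two_ne_zero) 1 (right_mem_Icc.2 hb1.le)
  set a := derivWithin g (Icc b 1) 1 with ha
  have hbase : HasDerivWithinAt g a (Icc (0:ℝ) 1) 1 := by
    refine (hgd.hasDerivWithinAt).mono_of_mem_nhdsWithin ?_
    rw [mem_nhdsWithin]
    exact ⟨Ioi b, isOpen_Ioi, hb1, fun y hy => ⟨le_of_lt hy.1, hy.2.2⟩⟩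
  have hA : a = 0 := by
    by_contra ha0
    obtain ⟨G, hG2, hGrep⟩ := hH1
    haveI hfm : IsFiniteMeasure (volume.restrict (Icc (0:ℝ) 1)) := by
      constructor
      rw [Measure.restrict_apply_univ, Real.volume_Icc]
      exact ENNReal.ofReal_lt_top
    have hGint : IntegrableOn G (Icc (0:ℝ) 1) volume := hG2.integrable one_le_two
    have hGii : ∀ u v : ℝ, u ∈ Icc (0:ℝ) 1 → v ∈ Icc (0:ℝ) 1 →
        IntervalIntegrable G volume u v := fun u v hu hv =>
      (hGint.mono_set (uIcc_subset_Icc hu hv)).intervalIntegrable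
    have hGabsii : ∀ u v : ℝ, u ∈ Icc (0:ℝ) 1 → v ∈ Icc (0:ℝ) 1 →
        IntervalIntegrable (fun s => |G s|) volume u v := by
      intro u v hu hv
      have habs : IntegrableOn (fun s => |G s|) (Icc (0:ℝ) 1) volume := hGint.abs
      exact (habs.mono_set (uIcc_subset_Icc hu hv)).intervalIntegrable
    obtain ⟨Mg, hMg0, hgbd⟩ : ∃ Mg : ℝ, 0 ≤ Mg ∧ ∀ t ∈ Icc (0:ℝ) 1, |g t| ≤ Mg := by
      refine ⟨∫ s in (0:ℝ)..1, |G s|, ?_, ?_⟩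
      · exact intervalIntegral.integral_nonneg zero_le_one fun s _ => abs_nonneg _
      · intro t ht
        rw [hGrep t ht]
        calc |∫ s in (0:ℝ)..t, G s| ≤ ∫ s in (0:ℝ)..t, |G s| :=
              intervalIntegral.abs_integral_le_integral_abs ht.1
          _ ≤ ∫ s in (0:ℝ)..1, |G s| :=
              intervalIntegral.integral_mono_interval le_rfl ht.1 ht.2
              (Filter.Eventually.of_forall fun s => abs_nonneg _)
              (hGabsii 0 1 (left_mem_Icc.2 zero_le_one) (right_mem_Icc.2 zero_le_one))
    have hrpc : Continuous fun v : ℝ => v ^ p :=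
      continuous_iff_continuousAt.2 fun y => Real.continuousAt_rpow_const y p (Or.inr hp0)
    set φ := fun u : ℝ => m * β * |u| ^ p with hφdef
    have hφc : Continuous φ := continuous_const.mul (hrpc.comp continuous_abs)
    set R2 := Mg + |a| with hR2def
    have hUC : UniformContinuousOn φ (Icc (-R2) R2) :=
      isCompact_Icc.uniformContinuousOn_of_continuous hφc.continuousOn
    have ha2 : 0 < a^2/8 := by positivity
    obtain ⟨η, hη0, hηs⟩ := Metric.uniformContinuousOn_iff.1 hUC (a^2/8) ha2
    set d := fun s => derivWithin g (Icc b 1) s with hddef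
    have hdc : ContinuousOn d (Icc b 1) :=
      hglast.continuousOn_derivWithin hud one_le_two
    have habs0 : 0 < |a| := abs_pos.2 ha0
    obtain ⟨δd, hδd0, hδds⟩ := Metric.continuousWithinAt_iff.1
      (hdc 1 (right_mem_Icc.2 hb1.le)) (|a|/8) (by positivity)
    obtain ⟨τ, hbτ, hτ1, hτη, hδτ⟩ :
        ∃ τ : ℝ, b < τ ∧ τ < 1 ∧ |a| * (1 - τ) < η ∧ 1 - τ ≤ δd/2 := by
      set T := max (max ((b+1)/2) (1 - η/(2*(|a|+1)))) (1 - δd/2) with hT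
      have hT1 : (b+1)/2 ≤ T := le_trans (le_max_left _ _) (le_max_left _ _)
      have hT2 : 1 - η/(2*(|a|+1)) ≤ T := le_trans (le_max_right _ _) (le_max_left _ _)
      have hT3 : 1 - δd/2 ≤ T := le_max_right _ _
      refine ⟨T, by linarith, ?_, ?_, by linarith⟩
      · apply max_lt (max_lt (by linarith) ?_) (by linarith)
        have : 0 < η/(2*(|a|+1)) := by positivity
        linarith
      · have h3 : 1 - T ≤ η/(2*(|a|+1)) := by linarith
        have h4 : |a| * (1-T) ≤ |a| * (η/(2*(|a|+1))) :=
          mul_le_mul_of_nonneg_left h3 habs0.le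
        have h6 : |a| * (η/(2*(|a|+1))) < η := by
          rw [mul_div_assoc']
          rw [div_lt_iff₀ (by positivity)]
          nlinarith [habs0, hη0]
        linarith
    have hτ0 : 0 ≤ τ := hb0.trans hbτ.le
    have hd1a : d 1 = a := rfl
    have hdnear : ∀ s ∈ Ioc τ 1, |d s - a| ≤ |a|/8 := by
      intro s hs
      have hsb : s ∈ Icc b 1 := ⟨(hbτ.trans hs.1).le, hs.2⟩
      have hdist : dist s 1 < δd := by
        rw [Real.dist_eq, abs_of_nonpos (by linarith [hs.2])]
        have := hs.1
        linarith
      have h := hδds hsb hdist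
      rw [Real.dist_eq, hd1a] at h
      exact h.le
    obtain ⟨f, hfg, hfeq⟩ : ∃ f : ℝ → ℝ, (∀ t, t ≤ τ → f t = g t) ∧
        (∀ t, τ ≤ t → f t = g t - a * (t - τ)) := by
      refine ⟨fun t => g t - a * max (t - τ) 0, fun t ht => ?_, fun t ht => ?_⟩
      · show g t - a * max (t - τ) 0 = g t
        rw [max_eq_right (by linarith : t - τ ≤ 0)]
        ring
      · show g t - a * max (t - τ) 0 = g t - a * (t - τ)
        rw [max_eq_left (by linarith : (0:ℝ) ≤ t - τ)]
    have hf2 : ContDiffOn ℝ 2 f (Icc τ 1) := by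
      have h1 : ContDiffOn ℝ 2 (fun t => g t - a*(t - τ)) (Icc τ 1) := by
        refine (hglast.mono (Icc_subset_Icc hbτ.le le_rfl)).sub ?_
        exact (contDiff_const.mul (contDiff_id.sub contDiff_const)).contDiffOn
      exact h1.congr fun t ht => hfeq t ht.1
    have hfpc : PiecewiseC2 f := piecewiseC2_perturb hx0 hxl hsm hcd hτ1 hbτ hfg hf2
    set ind := (Ioc τ 1).indicator (fun _ => (1:ℝ)) with hinddef
    have hindint : Integrable ind volume := by
      rw [hinddef]
      refine (integrable_indicator_iff measurableSet_Ioc).2 ?_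
      refine integrableOn_const ?_
      rw [Real.volume_Ioc]
      exact ENNReal.ofReal_ne_top
    have hindii : ∀ u v : ℝ, IntervalIntegrable ind volume u v :=
      fun u v => hindint.intervalIntegrable
    have hindval : ∀ t ∈ Icc (0:ℝ) 1, (∫ s in (0:ℝ)..t, ind s) = max (t - τ) 0 := by
      intro t ht
      rcases le_or_gt t τ with hcase | hcase
      · rw [max_eq_right (by linarith)]
        rw [intervalIntegral.integral_congr (g := fun _ => (0:ℝ)) ?_]
        · simp
        · intro s hs
          rw [uIcc_of_le ht.1] at hs
          exact indicator_of_notMem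
            (fun hmem => absurd hmem.1 (not_lt.2 (hs.2.trans hcase))) _
      · rw [max_eq_left (by linarith)]
        have hsplit : (∫ s in (0:ℝ)..t, ind s)
            = (∫ s in (0:ℝ)..τ, ind s) + ∫ s in τ..t, ind s :=
          (intervalIntegral.integral_add_adjacent_intervals (hindii 0 τ) (hindii τ t)).symm
        have h1 : (∫ s in (0:ℝ)..τ, ind s) = 0 := by
          rw [intervalIntegral.integral_congr (g := fun _ => (0:ℝ)) ?_]
          · simp
          · intro s hs
            rw [uIcc_of_le hτ0] at hs
            exact indicator_of_notMem (fun hmem => absurd hmem.1 (not_lt.2 hs.2)) _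
        have h2 : (∫ s in τ..t, ind s) = t - τ := by
          rw [intervalIntegral.integral_of_le hcase.le]
          have h2' : ∫ x in Ioc τ t, ind x = ∫ _x in Ioc τ t, (1:ℝ) :=
            setIntegral_congr_fun measurableSet_Ioc
              (fun u hu => indicator_of_mem (show u ∈ Ioc τ 1 from ⟨hu.1, hu.2.trans ht.2⟩)
                (fun _ => (1:ℝ)))
          rw [h2', setIntegral_const, measureReal_def, Real.volume_Ioc, smul_eq_mul, mul_one,
            ENNReal.toReal_ofReal (by linarith)]
        rw [hsplit, h1, h2]
        ring
    have hfH1 : InH1 f := by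
      refine ⟨fun s => G s - a * ind s, ?_, ?_⟩
      · refine hG2.sub ?_
        refine MemLp.const_mul ?_ a
        refine memLp_indicator_const 2 measurableSet_Ioc 1 (Or.inr ?_)
        rw [Measure.restrict_apply measurableSet_Ioc]
        exact ((measure_mono inter_subset_right).trans_lt
          (by rw [Real.volume_Icc]; exact ENNReal.ofReal_lt_top)).ne
      · intro t ht
        have h1 : (∫ s in (0:ℝ)..t, (G s - a * ind s))
            = (∫ s in (0:ℝ)..t, G s) - ∫ s in (0:ℝ)..t, a * ind s :=
          intervalIntegral.integral_sub (hGii 0 t (left_mem_Icc.2 zero_le_one) ht)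
            ((hindii 0 t).const_mul a)
        rw [h1, intervalIntegral.integral_const_mul, hindval t ht, ← hGrep t ht]
        rcases le_or_gt t τ with hc | hc
        · rw [hfg t hc, max_eq_right (by linarith : t - τ ≤ 0)]
          ring
        · rw [hfeq t hc.le, max_eq_left (by linarith : (0:ℝ) ≤ t - τ)]
    have hsets : Icc (0:ℝ) 1 =ᶠ[nhds 1] Icc b 1 := by
      filter_upwards [isOpen_Ioi.mem_nhds hb1] with y hy
      simp only [eq_iff_iff, mem_Icc]
      exact ⟨fun h => ⟨le_of_lt hy, h.2⟩, fun h => ⟨hb0.trans h.1, h.2⟩⟩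
    have hsets2 : Icc (0:ℝ) 1 =ᶠ[nhds 1] Icc τ 1 := by
      filter_upwards [isOpen_Ioi.mem_nhds hτ1] with y hy
      simp only [eq_iff_iff, mem_Icc]
      exact ⟨fun h => ⟨le_of_lt hy, h.2⟩, fun h => ⟨hτ0.trans h.1, h.2⟩⟩
    have hDg : ∀ s ∈ Ioc τ 1, derivWithin g (Icc (0:ℝ) 1) s = d s := by
      intro s hs
      rcases eq_or_lt_of_le hs.2 with heq | hlt
      · rw [heq, derivWithin_congr_set hsets]
      · have hbs : b < s := hbτ.trans hs.1
        have hgat : DifferentiableAt ℝ g s :=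
          (hglast.differentiableOn two_ne_zero s ⟨hbs.le, hlt.le⟩).differentiableAt
            (Icc_mem_nhds hbs hlt)
        have h1 : derivWithin g (Icc (0:ℝ) 1) s = deriv g s :=
          derivWithin_of_mem_nhds (Icc_mem_nhds (hτ0.trans_lt hs.1) hlt)
        have h2 : d s = deriv g s := derivWithin_of_mem_nhds (Icc_mem_nhds hbs hlt)
        rw [h1, h2]
    have hDf : ∀ s ∈ Ioc τ 1, derivWithin f (Icc (0:ℝ) 1) s = d s - a := by
      intro s hs
      rcases eq_or_lt_of_le hs.2 with heq | hlt
      · subst heq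
        rw [derivWithin_congr_set hsets2]
        have hgw : HasDerivWithinAt g a (Icc τ 1) 1 :=
          hgd.hasDerivWithinAt.mono (Icc_subset_Icc hbτ.le le_rfl)
        have hlin : HasDerivWithinAt (fun t : ℝ => a * (t - τ)) (a * 1) (Icc τ 1) 1 :=
          ((hasDerivWithinAt_id 1 (Icc τ 1)).sub_const τ).const_mul a
        have hF : HasDerivWithinAt (fun t => g t - a * (t - τ)) (a - a * 1) (Icc τ 1) 1 :=
          hgw.sub hlin
        have hFf : HasDerivWithinAt f (a - a * 1) (Icc τ 1) 1 :=
          hF.congr (fun y hy => hfeq y hy.1) (hfeq 1 hτ1.le)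
        rw [hFf.derivWithin (uniqueDiffOn_Icc hτ1 1 (right_mem_Icc.2 hτ1.le))]
        rw [hd1a]
        ring
      · have hbs : b < s := hbτ.trans hs.1
        have hgat : DifferentiableAt ℝ g s :=
          (hglast.differentiableOn two_ne_zero s ⟨hbs.le, hlt.le⟩).differentiableAt
            (Icc_mem_nhds hbs hlt)
        have hds : d s = deriv g s := derivWithin_of_mem_nhds (Icc_mem_nhds hbs hlt)
        have h1 : HasDerivAt (fun t => g t - a * (t - τ)) (deriv g s - a * 1) s :=
          hgat.hasDerivAt.sub (((hasDerivAt_id s).sub_const τ).const_mul a)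
        have h2 : f =ᶠ[nhds s] fun t => g t - a * (t - τ) := by
          filter_upwards [isOpen_Ioi.mem_nhds hs.1] with y hy
          exact hfeq y (le_of_lt hy)
        have hfat : HasDerivAt f (deriv g s - a * 1) s := h1.congr_of_eventuallyEq h2
        rw [derivWithin_of_mem_nhds (Icc_mem_nhds (hτ0.trans_lt hs.1) hlt), hfat.deriv, hds]
        ring
    set LF := fun s => m * β * |f s| ^ p
      - (1/2) * (derivWithin f (Icc (0:ℝ) 1) s)^2 with hLF
    set LG := fun s => m * β * |g s| ^ p
      - (1/2) * (derivWithin g (Icc (0:ℝ) 1) s)^2 with hLG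
    have hgain : ∀ s ∈ Ioc τ 1, LG s + a^2/4 ≤ LF s := by
      intro s hs
      simp only [hLF, hLG]
      rw [hDg s hs, hDf s hs]
      have hsIcc : s ∈ Icc (0:ℝ) 1 := ⟨(hτ0.trans_lt hs.1).le, hs.2⟩
      have hgs : |g s| ≤ Mg := hgbd s hsIcc
      have hfsg : |f s - g s| ≤ |a| * (1 - τ) := by
        rw [hfeq s hs.1.le, show g s - a * (s - τ) - g s = -(a * (s - τ)) by ring,
          abs_neg, abs_mul]
        refine mul_le_mul_of_nonneg_left ?_ (abs_nonneg a)
        rw [abs_of_nonneg (by linarith [hs.1] : (0:ℝ) ≤ s - τ)]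
        linarith [hs.2]
      have hfs : |f s| ≤ R2 := by
        have h1 : |f s| ≤ |g s| + |f s - g s| := by
          calc |f s| = |g s + (f s - g s)| := by ring_nf
            _ ≤ |g s| + |f s - g s| := abs_add_le _ _
        have h2 : |a| * (1 - τ) ≤ |a| * 1 := mul_le_mul_of_nonneg_left (by linarith) habs0.le
        rw [hR2def]
        linarith [hfsg]
      have hφclose : |φ (f s) - φ (g s)| < a^2/8 := by
        have hfmem : f s ∈ Icc (-R2) R2 := by
          rw [mem_Icc]; exact abs_le.1 hfs
        have hgmem : g s ∈ Icc (-R2) R2 := by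
          have : |g s| ≤ R2 := by rw [hR2def]; linarith [habs0.le]
          rw [mem_Icc]; exact abs_le.1 this
        have hdist : dist (f s) (g s) < η := by
          rw [Real.dist_eq]; exact lt_of_le_of_lt hfsg hτη
        have h := hηs _ hfmem _ hgmem hdist
        rwa [Real.dist_eq] at h
      have hdn := hdnear s hs
      have e1 : φ (g s) - a^2/8 ≤ φ (f s) := by
        have h := abs_lt.1 hφclose
        linarith [h.1]
      have e2 : a^2 - a^2/8 ≤ a * d s := by
        have h1 : |a * (d s - a)| ≤ a^2/8 := by
          rw [abs_mul]
          have h2 : |a| * |d s - a| ≤ |a| * (|a|/8) :=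
            mul_le_mul_of_nonneg_left hdn (abs_nonneg a)
          have h3 : |a| * (|a|/8) = a^2/8 := by
            rw [pow_two, ← abs_mul_abs_self a]; ring
          linarith
        have h2 : -(a^2/8) ≤ a * (d s - a) := neg_le_of_abs_le h1
        have h3 : a * d s - a * a = a * (d s - a) := by ring
        linarith [h2, h3, pow_two a]
      simp only [hφdef] at e1
      have hexp : (d s - a)^2 = (d s)^2 - 2*(a*(d s)) + a^2 := by ring
      rw [hexp]
      linarith [e1, e2]
    have hiLF : IntervalIntegrable LF volume 0 1 := lag_integrable m β p hp0 hfpc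
    have hiLG : IntervalIntegrable LG volume 0 1 := lag_integrable m β p hp0 hpcg
    have hKf : ∀ θ : ℝ, K m β p f θ = ∫ s in (0:ℝ)..θ, LF s := fun θ => rfl
    have hKg : ∀ θ : ℝ, K m β p g θ = ∫ s in (0:ℝ)..θ, LG s := fun θ => rfl
    have hae : ∀ᵐ s : ℝ, s ≠ τ := by
      have h : volume ({τ} : Set ℝ) = 0 := measure_singleton τ
      rw [ae_iff]
      simp [not_not]
    have hLFG : ∀ s, s < τ → LF s = LG s := by
      intro s hsτ
      have h1 : f s = g s := hfg s hsτ.le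
      have h2 : derivWithin f (Icc (0:ℝ) 1) s = derivWithin g (Icc (0:ℝ) 1) s := by
        apply Filter.EventuallyEq.derivWithin_eq
        · refine Filter.Eventually.filter_mono nhdsWithin_le_nhds ?_
          filter_upwards [isOpen_Iio.mem_nhds hsτ] with y hy
          exact hfg y (le_of_lt hy)
        · exact h1
      simp only [hLF, hLG, h1, h2]
    have hKeq : ∀ θ ∈ Icc (0:ℝ) 1, θ ≤ τ → K m β p f θ = K m β p g θ := by
      intro θ hθ hθτ
      rw [hKf, hKg]
      apply intervalIntegral.integral_congr_ae
      filter_upwards [hae] with s hsne hsmem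
      rw [uIoc_of_le hθ.1] at hsmem
      exact hLFG s (lt_of_le_of_ne (hsmem.2.trans hθτ) hsne)
    have hmem01 : ∀ θ : ℝ, θ ∈ Icc (0:ℝ) 1 → θ ∈ Icc (0:ℝ) 1 := fun θ h => h
    have hτmem : τ ∈ Icc (0:ℝ) 1 := ⟨hτ0, hτ1.le⟩
    have hdiffge : ∀ θ ∈ Icc (0:ℝ) 1, τ ≤ θ →
        K m β p g θ + (θ - τ) * (a^2/4) ≤ K m β p f θ := by
      intro θ hθ hτθ
      have hiLFθ : IntervalIntegrable LF volume τ θ := interval_int_sub hiLF hτmem hθ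
      have hiLGθ : IntervalIntegrable LG volume τ θ := interval_int_sub hiLG hτmem hθ
      have hsf : K m β p f θ = K m β p f τ + ∫ s in τ..θ, LF s := by
        rw [hKf, hKf]
        exact (intervalIntegral.integral_add_adjacent_intervals
          (interval_int_sub hiLF (left_mem_Icc.2 zero_le_one) hτmem) hiLFθ).symm
      have hsg : K m β p g θ = K m β p g τ + ∫ s in τ..θ, LG s := by
        rw [hKg, hKg]
        exact (intervalIntegral.integral_add_adjacent_intervals
          (interval_int_sub hiLG (left_mem_Icc.2 zero_le_one) hτmem) hiLGθ).symm
      have hKτ : K m β p f τ = K m β p g τ := hKeq τ hτmem le_rfl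
      have hmono : (∫ s in τ..θ, (LG s + a^2/4)) ≤ ∫ s in τ..θ, LF s := by
        apply intervalIntegral.integral_mono_ae_restrict hτθ
          (hiLGθ.add intervalIntegrable_const) hiLFθ
        filter_upwards [ae_restrict_of_ae hae, ae_restrict_mem measurableSet_Icc]
          with s hsne hsmem
        exact hgain s ⟨lt_of_le_of_ne hsmem.1 (Ne.symm hsne), hsmem.2.trans hθ.2⟩
      have hconst : (∫ s in τ..θ, (LG s + a^2/4))
          = (∫ s in τ..θ, LG s) + (θ-τ)*(a^2/4) := by
        rw [intervalIntegral.integral_add hiLGθ intervalIntegrable_const,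
          intervalIntegral.integral_const, smul_eq_mul]
      rw [hsf, hsg, hKτ]
      rw [hconst] at hmono
      linarith
    have hconf : ∀ θ ∈ Icc (0:ℝ) 1, 0 ≤ K m β p f θ := by
      intro θ hθ
      rcases le_or_gt θ τ with h | h
      · rw [hKeq θ hθ h]; exact hcon θ hθ
      · have h1 := hdiffge θ hθ h.le
        have h2 := hcon θ hθ
        have h3 : 0 ≤ (θ-τ)*(a^2/4) := mul_nonneg (by linarith) (by positivity)
        linarith
    have hstrict : K m β p g 1 < K m β p f 1 := by
      have h1 := hdiffge 1 (right_mem_Icc.2 zero_le_one) hτ1.le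
      have h2 : 0 < (1 - τ) * (a^2/4) := mul_pos (by linarith) (by positivity)
      linarith
    have hBdd : BddAbove {k : ℝ | ∃ f : ℝ → ℝ, PiecewiseC2 f ∧ InH1 f ∧
        (∀ θ ∈ Icc (0:ℝ) 1, 0 ≤ K m β p f θ) ∧ K m β p f 1 = k} := by
      refine ⟨m * β * (max 1 ((2*m*β) ^ (1/(2-p)))) ^ p, ?_⟩
      rintro k ⟨f', hf'1, hf'2, _, rfl⟩
      have hf'0 : f' 0 = 0 := by
        obtain ⟨G', _, hrep'⟩ := hf'2
        rw [hrep' 0 (left_mem_Icc.2 zero_le_one), intervalIntegral.integral_same]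
      exact K_le m β p hm hβ hp0 hp2 hf'1 hf'0
    have hmem : K m β p f 1 ∈ {k : ℝ | ∃ f : ℝ → ℝ, PiecewiseC2 f ∧ InH1 f ∧
        (∀ θ ∈ Icc (0:ℝ) 1, 0 ≤ K m β p f θ) ∧ K m β p f 1 = k} :=
      ⟨f, hfpc, hfH1, hconf, rfl⟩
    have hle : K m β p f 1 ≤ K m β p g 1 := by
      rw [hmax]
      exact le_csSup hBdd hmem
    linarith
  exact hA ▸ hbase
end

section
/- If f ∈ H¹ satisfies |f(1)| > z̄, then there exists θ ∈ [0,1] with K(f,θ) < 0. In other words, no H¹ function whose functional K(f,·) remains nonnegative on all of [0,1] can end at a point of absolute value exceeding z̄. -/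
open MeasureTheory Set

/-- `r(s) = ((mβs²/2)(2−p)²)^{1/(2−p)}`, the rescaled right-most particle path. -/
noncomputable def rPath (m β p : ℝ) (s : ℝ) : ℝ :=
  (m * β * s ^ 2 / 2 * (2 - p) ^ 2) ^ ((1:ℝ) / (2 - p))

/-- `z̄ = r(1)`. -/
noncomputable def zbar (m β p : ℝ) : ℝ := rPath m β p 1



open MeasureTheory Set Filter Topology intervalIntegral

lemma ae_hasDerivAt_primitive (g : ℝ → ℝ) (hg : Integrable g (volume : Measure ℝ)) :
    ∀ᵐ x : ℝ, HasDerivAt (fun t => ∫ s in (0:ℝ)..t, g s) (g x) x := by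
  filter_upwards [IsUnifLocDoublingMeasure.ae_tendsto_average_norm_sub
    (μ := (volume : Measure ℝ)) hg.locallyIntegrable 1] with x hx
  have hδ : Tendsto (fun h : ℝ => |h|) (𝓝[≠] (0:ℝ)) (𝓝[>] 0) := by
    rw [tendsto_nhdsWithin_iff]
    constructor
    · simpa using (continuous_abs.tendsto (0:ℝ)).mono_left nhdsWithin_le_nhds
    · filter_upwards [self_mem_nhdsWithin] with h hh
      exact abs_pos.2 hh
  have hmem : ∀ᶠ h : ℝ in 𝓝[≠] (0:ℝ), x ∈ Metric.closedBall x (1 * |h|) := by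
    filter_upwards with h
    simp [abs_nonneg]
  have havg := hx (ι := ℝ) (l := 𝓝[≠] (0:ℝ)) (fun _ => x) (fun h => |h|) hδ hmem
  rw [hasDerivAt_iff_tendsto_slope_zero]
  have key : ∀ h : ℝ, h ≠ 0 →
      ‖h⁻¹ • ((∫ s in (0:ℝ)..(x + h), g s) - ∫ s in (0:ℝ)..x, g s) - g x‖
        ≤ 2 * ⨍ y in Metric.closedBall x |h|, ‖g y - g x‖ := by
    intro h hh
    have habs : (0:ℝ) < |h| := abs_pos.2 hh
    have hii : ∀ a b : ℝ, IntervalIntegrable g volume a b := fun a b => hg.intervalIntegrable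
    have h1 : (∫ s in (0:ℝ)..(x + h), g s) - ∫ s in (0:ℝ)..x, g s = ∫ s in x..(x+h), g s :=
      integral_interval_sub_left (hii 0 (x+h)) (hii 0 x)
    have h2 : (∫ s in x..(x+h), g s) - h * g x = ∫ s in x..(x+h), (g s - g x) := by
      rw [intervalIntegral.integral_sub (hii x (x+h)) intervalIntegrable_const,
        intervalIntegral.integral_const]
      simp [smul_eq_mul]
    have h3 : h⁻¹ • ((∫ s in (0:ℝ)..(x + h), g s) - ∫ s in (0:ℝ)..x, g s) - g x
        = h⁻¹ • (∫ s in x..(x+h), (g s - g x)) := by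
      rw [h1, ← h2]
      rw [smul_sub, smul_eq_mul h⁻¹ (h * g x), ← mul_assoc, inv_mul_cancel₀ hh, one_mul]
    rw [h3]
    have h4 : ‖∫ s in x..(x+h), (g s - g x)‖ ≤ ∫ y in Metric.closedBall x |h|, ‖g y - g x‖ := by
      refine (intervalIntegral.norm_integral_le_integral_norm_uIoc).trans ?_
      apply setIntegral_mono_set
      · refine (hg.integrableOn.sub (integrableOn_const ?_)).norm
        rw [Real.volume_closedBall]; exact ENNReal.ofReal_ne_top
      · filter_upwards with y using norm_nonneg _
      · apply HasSubset.Subset.eventuallyLE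
        intro y hy
        have h6 := neg_abs_le h
        have h7 := le_abs_self h
        rcases le_total x (x+h) with hc | hc
        · rw [uIoc_of_le hc] at hy
          rw [Metric.mem_closedBall, Real.dist_eq, abs_le]
          exact ⟨by linarith [hy.1], by linarith [hy.2]⟩
        · rw [uIoc_of_ge hc] at hy
          rw [Metric.mem_closedBall, Real.dist_eq, abs_le]
          exact ⟨by linarith [hy.1], by linarith [hy.2]⟩
    have hvol : volume.real (Metric.closedBall x |h|) = 2 * |h| := by
      rw [measureReal_def, Real.volume_closedBall, ENNReal.toReal_ofReal (by positivity)]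
    have h5 : (∫ y in Metric.closedBall x |h|, ‖g y - g x‖)
        = (2 * |h|) * ⨍ y in Metric.closedBall x |h|, ‖g y - g x‖ := by
      rw [setAverage_eq, hvol, smul_eq_mul, ← mul_assoc,
        mul_inv_cancel₀ (by positivity), one_mul]
    calc ‖h⁻¹ • (∫ s in x..(x+h), (g s - g x))‖
        = |h|⁻¹ * ‖∫ s in x..(x+h), (g s - g x)‖ := by
          rw [norm_smul, norm_inv, Real.norm_eq_abs]
      _ ≤ |h|⁻¹ * ((2 * |h|) * ⨍ y in Metric.closedBall x |h|, ‖g y - g x‖) := by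
          rw [← h5]; exact mul_le_mul_of_nonneg_left h4 (by positivity)
      _ = 2 * ⨍ y in Metric.closedBall x |h|, ‖g y - g x‖ := by
          field_simp
  have hb : Tendsto (fun h : ℝ => 2 * ⨍ y in Metric.closedBall x |h|, ‖g y - g x‖)
      (𝓝[≠] (0:ℝ)) (𝓝 0) := by
    simpa using havg.const_mul 2
  rw [show (𝓝 (g x)) = 𝓝 (0 + g x) by rw [zero_add]]
  have := squeeze_zero_norm' (f := fun h : ℝ =>
      h⁻¹ • ((∫ s in (0:ℝ)..(x + h), g s) - ∫ s in (0:ℝ)..x, g s) - g x)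
    (by filter_upwards [self_mem_nhdsWithin] with h hh using key h hh) hb
  simpa using this.add_const (g x)

lemma swap_lemma (ε t : ℝ) (hε : 0 < ε) (het : ε ≤ t) (D ψ : ℝ → ℝ)
    (hD : IntegrableOn D (Ioc ε t)) (hψ : IntegrableOn ψ (Ioc ε t)) :
    ∫ s in Ioc ε t, (D s * ∫ u in Ioc s t, ψ u) =
      ∫ u in Ioc ε t, ((∫ s in Ioc ε u, D s) * ψ u) := by
  set μ := volume.restrict (Ioc ε t) with hμ
  set k : ℝ × ℝ → ℝ := ({q : ℝ × ℝ | q.1 < q.2}).indicator (fun q => D q.1 * ψ q.2) with hk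
  have hkint : Integrable k (μ.prod μ) := by
    have h0 : Integrable (fun q : ℝ × ℝ => D q.1 * ψ q.2) (μ.prod μ) := hD.mul_prod hψ
    exact h0.indicator (measurableSet_lt measurable_fst measurable_snd)
  have hswap := integral_integral_swap (f := fun s u => k (s, u)) (μ := μ) (ν := μ) hkint
  have hL : (∫ s, (∫ u, k (s, u) ∂μ) ∂μ) = ∫ s in Ioc ε t, (D s * ∫ u in Ioc s t, ψ u) := by
    rw [hμ]
    apply setIntegral_congr_fun measurableSet_Ioc
    intro s hs
    show (∫ u in Ioc ε t, k (s, u)) = D s * ∫ u in Ioc s t, ψ u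
    have e1 : (fun u => k (s, u)) = (Ioi s).indicator (fun u => D s * ψ u) := by
      funext u
      simp only [hk, indicator_apply, mem_setOf_eq, mem_Ioi]
    rw [e1, MeasureTheory.integral_indicator measurableSet_Ioi,
      Measure.restrict_restrict measurableSet_Ioi]
    have e2 : Ioi s ∩ Ioc ε t = Ioc s t := by
      ext u; simp only [mem_inter_iff, mem_Ioi, mem_Ioc]
      constructor
      · rintro ⟨h1, _, h3⟩; exact ⟨h1, h3⟩
      · rintro ⟨h1, h2⟩; exact ⟨h1, lt_trans hs.1 h1, h2⟩
    rw [e2, MeasureTheory.integral_const_mul]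
  have hR : (∫ u, (∫ s, k (s, u) ∂μ) ∂μ) = ∫ u in Ioc ε t, ((∫ s in Ioc ε u, D s) * ψ u) := by
    rw [hμ]
    apply setIntegral_congr_fun measurableSet_Ioc
    intro u hu
    show (∫ s in Ioc ε t, k (s, u)) = (∫ s in Ioc ε u, D s) * ψ u
    have e1 : (fun s => k (s, u)) = (Iio u).indicator (fun s => D s * ψ u) := by
      funext s
      simp only [hk, indicator_apply, mem_setOf_eq, mem_Iio]
    rw [e1, MeasureTheory.integral_indicator measurableSet_Iio,
      Measure.restrict_restrict measurableSet_Iio]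
    have e2 : Iio u ∩ Ioc ε t = Ioo ε u := by
      ext s; simp only [mem_inter_iff, mem_Iio, mem_Ioc, mem_Ioo]
      constructor
      · rintro ⟨h1, h2, _⟩; exact ⟨h2, h1⟩
      · rintro ⟨h1, h2⟩; exact ⟨h2, h1, le_trans (le_of_lt h2) hu.2⟩
    rw [e2, MeasureTheory.integral_mul_const, ← integral_Ioc_eq_integral_Ioo]
  rw [← hL, ← hR, hswap]

lemma weighted_ineq (a ε t : ℝ) (ha : 0 ≤ a) (hε : 0 < ε) (het : ε ≤ t) (ht1 : t ≤ 1)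
    (D : ℝ → ℝ) (hD : IntegrableOn D (Ioc 0 1))
    (hE : ∀ x ∈ Icc (0:ℝ) 1, 0 ≤ ∫ s in Ioc 0 x, D s) :
    -(∫ s in Ioc 0 ε, D s) * ε ^ (-a : ℝ) ≤ ∫ s in Ioc ε t, D s * s ^ (-a : ℝ) := by
  have ht0 : (0:ℝ) < t := lt_of_lt_of_le hε het
  set ψ : ℝ → ℝ := fun u => a * u ^ (-1 - a : ℝ) with hψdef
  -- basic integrabilities
  have hDe : IntegrableOn D (Ioc ε t) :=
    hD.mono_set (fun x hx => ⟨lt_trans hε hx.1, le_trans hx.2 ht1⟩)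
  have hψcont : ContinuousOn ψ (Icc ε t) := by
    apply ContinuousOn.mul continuousOn_const
    intro u hu
    exact (Real.continuousAt_rpow_const u _ (Or.inl (ne_of_gt (lt_of_lt_of_le hε hu.1)))).continuousWithinAt
  have hψint : IntegrableOn ψ (Ioc ε t) :=
    (hψcont.integrableOn_Icc).mono_set Ioc_subset_Icc_self
  have hψnonneg : ∀ u ∈ Ioc ε t, 0 ≤ ψ u := fun u hu =>
    mul_nonneg ha (Real.rpow_nonneg (le_of_lt (lt_trans hε hu.1)) _)
  -- the inner integral of ψ
  have hFsub : ∀ s : ℝ, 0 < s → s ≤ t → (∫ u in Ioc s t, ψ u) = s ^ (-a:ℝ) - t ^ (-a:ℝ) := by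
    intro s hs hst
    rw [← intervalIntegral.integral_of_le hst]
    rcases eq_or_lt_of_le ha with rfl | hapos
    · simp [hψdef]
    · rw [hψdef]
      rw [intervalIntegral.integral_const_mul]
      rw [integral_rpow (Or.inr ⟨by intro h; exact absurd h (by norm_num; linarith), by
          intro hmem
          rcases hmem with ⟨h1, h2⟩
          rw [min_def] at h1
          split_ifs at h1 <;> linarith⟩)]
      have : (-1 - a + 1 : ℝ) = -a := by ring
      rw [this]
      have ha' : a ≠ 0 := ne_of_gt hapos
      rw [mul_div_assoc'] at *
      rw [div_eq_iff (neg_ne_zero.2 ha')]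
      ring
  -- bounded rpow weight is integrable against D
  have hwmeas : AEStronglyMeasurable (fun s : ℝ => s ^ (-a:ℝ))
      (volume.restrict (Ioc ε t)) :=
    (measurable_id.pow_const _).aestronglyMeasurable
  have hwbdd : ∀ᵐ s ∂(volume.restrict (Ioc ε t)), ‖s ^ (-a:ℝ)‖ ≤ ε ^ (-a:ℝ) := by
    rw [ae_restrict_iff' measurableSet_Ioc]
    filter_upwards with s hs
    rw [Real.norm_eq_abs, abs_of_nonneg (Real.rpow_nonneg (le_of_lt (lt_trans hε hs.1)) _)]
    exact Real.rpow_le_rpow_of_nonpos hε (le_of_lt hs.1) (neg_nonpos.2 ha)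
  have hInt1 : IntegrableOn (fun s => D s * s ^ (-a:ℝ)) (Ioc ε t) := by
    have := Integrable.bdd_mul (f := fun s : ℝ => s ^ (-a:ℝ)) (g := D) hDe hwmeas hwbdd
    exact this.congr (by filter_upwards with s using mul_comm _ _)
  -- E notation
  set E : ℝ → ℝ := fun x => ∫ s in Ioc 0 x, D s with hEdef
  have hEet : ∫ s in Ioc ε t, D s = E t - E ε := by
    have h1 : IntervalIntegrable D volume 0 ε := by
      rw [intervalIntegrable_iff]
      exact hD.mono_set (by rw [uIoc_of_le (le_of_lt hε)]; exact Ioc_subset_Ioc le_rfl (le_trans het ht1))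
    have h2 : IntervalIntegrable D volume ε t := by
      rw [intervalIntegrable_iff]
      exact hD.mono_set (by rw [uIoc_of_le het]; exact fun x hx => ⟨lt_trans hε hx.1, le_trans hx.2 ht1⟩)
    have h3 := intervalIntegral.integral_add_adjacent_intervals h1 h2
    rw [hEdef]
    simp only [← intervalIntegral.integral_of_le (le_of_lt hε),
      ← intervalIntegral.integral_of_le het, ← intervalIntegral.integral_of_le (le_of_lt ht0)]
    linarith
  -- continuity/integrability of partial integrals of D
  have hprim : ContinuousOn (fun x => ∫ s in Ioc ε x, D s) (Icc ε t) := by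
    apply intervalIntegral.continuousOn_primitive
    exact hD.mono_set (fun x hx => ⟨lt_of_lt_of_le hε hx.1, le_trans hx.2 ht1⟩)
  have hprimbdd : ∀ᵐ u ∂(volume.restrict (Ioc ε t)),
      ‖∫ s in Ioc ε u, D s‖ ≤ ∫ s in Ioc ε t, ‖D s‖ := by
    rw [ae_restrict_iff' measurableSet_Ioc]
    filter_upwards with u hu
    refine (MeasureTheory.norm_integral_le_integral_norm _).trans ?_
    apply setIntegral_mono_set hDe.norm
    · filter_upwards with s using norm_nonneg _
    · exact HasSubset.Subset.eventuallyLE (Ioc_subset_Ioc le_rfl hu.2)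
  have hTint : IntegrableOn (fun u => (∫ s in Ioc ε u, D s) * ψ u) (Ioc ε t) :=
    Integrable.bdd_mul (f := fun u => ∫ s in Ioc ε u, D s) (g := ψ) hψint
      ((hprim.mono Ioc_subset_Icc_self).aestronglyMeasurable measurableSet_Ioc) hprimbdd
  -- apply swap
  have hswap := swap_lemma ε t hε het D ψ hDe hψint
  -- lower bound the right side of swap
  have hTlow : ∫ u in Ioc ε t, (-(E ε)) * ψ u
      ≤ ∫ u in Ioc ε t, ((∫ s in Ioc ε u, D s) * ψ u) := by
    apply setIntegral_mono_on (hψint.const_mul _) hTint measurableSet_Ioc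
    intro u hu
    apply mul_le_mul_of_nonneg_right ?_ (hψnonneg u hu)
    have hiu : ∫ s in Ioc ε u, D s = E u - E ε := by
      have h1 : IntervalIntegrable D volume 0 ε := by
        rw [intervalIntegrable_iff]
        exact hD.mono_set (by rw [uIoc_of_le (le_of_lt hε)]; exact Ioc_subset_Ioc le_rfl (le_trans het ht1))
      have h2 : IntervalIntegrable D volume ε u := by
        rw [intervalIntegrable_iff]
        exact hD.mono_set (by rw [uIoc_of_le (le_of_lt hu.1)]; exact fun x hx => ⟨lt_trans hε hx.1, le_trans hx.2 (le_trans hu.2 ht1)⟩)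
      have h3 := intervalIntegral.integral_add_adjacent_intervals h1 h2
      rw [hEdef]
      simp only [← intervalIntegral.integral_of_le (le_of_lt hε),
        ← intervalIntegral.integral_of_le (le_of_lt hu.1),
        ← intervalIntegral.integral_of_le (le_of_lt (lt_trans hε hu.1))]
      linarith
    rw [hiu]
    have hEu : 0 ≤ E u := hE u ⟨le_of_lt (lt_trans hε hu.1), le_trans hu.2 ht1⟩
    linarith
  -- compute ∫ const * ψ
  have hconstψ : ∫ u in Ioc ε t, (-(E ε)) * ψ u = (-(E ε)) * (ε ^ (-a:ℝ) - t ^ (-a:ℝ)) := by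
    rw [MeasureTheory.integral_const_mul, hFsub ε hε het]
  -- split the weighted integral
  have hsplit : ∫ s in Ioc ε t, D s * s ^ (-a:ℝ)
      = (E t - E ε) * t ^ (-a:ℝ) + ∫ s in Ioc ε t, (D s * ∫ u in Ioc s t, ψ u) := by
    have e1 : ∀ s ∈ Ioc ε t, D s * (∫ u in Ioc s t, ψ u) = D s * s ^ (-a:ℝ) - D s * t ^ (-a:ℝ) := by
      intro s hs
      rw [hFsub s (lt_trans hε hs.1) hs.2]
      ring
    rw [setIntegral_congr_fun measurableSet_Ioc e1, integral_sub hInt1 (hDe.mul_const _),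
      MeasureTheory.integral_mul_const, hEet]
    ring
  have hEt : 0 ≤ E t := hE t ⟨le_of_lt ht0, ht1⟩
  have hEε : 0 ≤ E ε := hE ε ⟨le_of_lt hε, le_trans het ht1⟩
  have hta : 0 ≤ t ^ (-a:ℝ) := Real.rpow_nonneg (le_of_lt ht0) _
  have hmul : 0 ≤ E t * t ^ (-a:ℝ) := mul_nonneg hEt hta
  have hmul2 : 0 ≤ E ε * t ^ (-a:ℝ) := mul_nonneg hEε hta
  rw [hsplit, hswap]
  rw [hconstψ] at hTlow
  rw [hEdef] at *
  nlinarith [hTlow]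

lemma CS2 {μ : Measure ℝ} (u v : ℝ → ℝ) (hu_nn : 0 ≤ᵐ[μ] u) (hv_nn : 0 ≤ᵐ[μ] v)
    (hu : MemLp u 2 μ) (hv : MemLp v 2 μ) :
    (∫ s, u s * v s ∂μ)^2 ≤ (∫ s, u s ^ 2 ∂μ) * (∫ s, v s ^ 2 ∂μ) := by
  have h2 : (ENNReal.ofReal (2:ℝ)) = 2 := by norm_num [ENNReal.ofReal_ofNat]
  have hpq : (2:ℝ).HolderConjugate 2 := (Real.holderConjugate_iff_eq_conjExponent (by norm_num)).2 (by norm_num)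
  have hH := integral_mul_le_Lp_mul_Lq_of_nonneg hpq hu_nn hv_nn (by rw [h2]; exact hu)
    (by rw [h2]; exact hv)
  have hI : 0 ≤ ∫ s, u s * v s ∂μ := by
    apply MeasureTheory.integral_nonneg_of_ae
    filter_upwards [hu_nn, hv_nn] with s h1 h2 using mul_nonneg h1 h2
  have hA : 0 ≤ ∫ s, u s ^ (2:ℝ) ∂μ := by
    apply MeasureTheory.integral_nonneg_of_ae
    filter_upwards [hu_nn] with s h1 using Real.rpow_nonneg h1 _
  have hB : 0 ≤ ∫ s, v s ^ (2:ℝ) ∂μ := by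
    apply MeasureTheory.integral_nonneg_of_ae
    filter_upwards [hv_nn] with s h1 using Real.rpow_nonneg h1 _
  have hsq : ((∫ s, u s ^ (2:ℝ) ∂μ) ^ ((1:ℝ)/2) * (∫ s, v s ^ (2:ℝ) ∂μ) ^ ((1:ℝ)/2))^2
      = (∫ s, u s ^ (2:ℝ) ∂μ) * (∫ s, v s ^ (2:ℝ) ∂μ) := by
    rw [mul_pow, ← Real.rpow_natCast (_ ^ ((1:ℝ)/2)) 2, ← Real.rpow_natCast (_ ^ ((1:ℝ)/2)) 2,
      ← Real.rpow_mul hA, ← Real.rpow_mul hB]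
    norm_num
  have conv : ∀ w : ℝ → ℝ, (0 ≤ᵐ[μ] w) → (∫ s, w s ^ (2:ℝ) ∂μ) = ∫ s, w s ^ 2 ∂μ := by
    intro w hw
    apply MeasureTheory.integral_congr_ae
    filter_upwards [hw] with s hs
    rw [show ((2:ℝ)) = ((2:ℕ):ℝ) by norm_num, Real.rpow_natCast]
  calc (∫ s, u s * v s ∂μ)^2 ≤ ((∫ s, u s ^ (2:ℝ) ∂μ) ^ ((1:ℝ)/2) * (∫ s, v s ^ (2:ℝ) ∂μ) ^ ((1:ℝ)/2))^2 := by
        apply sq_le_sq' _ hH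
        · refine le_trans ?_ hI
          simp only [neg_nonpos]
          positivity
    _ = (∫ s, u s ^ (2:ℝ) ∂μ) * (∫ s, v s ^ (2:ℝ) ∂μ) := hsq
    _ = (∫ s, u s ^ 2 ∂μ) * (∫ s, v s ^ 2 ∂μ) := by rw [conv u hu_nn, conv v hv_nn]

set_option maxHeartbeats 1000000 in
lemma main_bound (m β p : ℝ) (hm : 0 < m) (hβ : 0 < β) (hp0 : 0 ≤ p) (hp2 : p < 2)
    (f g : ℝ → ℝ)
    (hg2 : MemLp g 2 (volume.restrict (Icc (0:ℝ) 1)))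
    (hf : ∀ t ∈ Icc (0:ℝ) 1, f t = ∫ s in (0:ℝ)..t, g s)
    (hE : ∀ x ∈ Icc (0:ℝ) 1, 0 ≤ ∫ s in Ioc (0:ℝ) x, (2*m*β*|f s|^p - g s^2)) :
    |f 1| ≤ (m * β * (2-p)^2/2) ^ ((1:ℝ)/(2-p)) := by
  have h2p : (0:ℝ) < 2 - p := by linarith
  set q : ℝ := 2/(2-p) with hqdef
  have hq0 : 0 < q := by positivity
  have hq1 : 1 ≤ q := by rw [hqdef, le_div_iff₀ h2p]; linarith
  set a : ℝ := q - 1 with hadef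
  have ha : 0 ≤ a := by rw [hadef]; linarith
  have hq2 : q * (2-p) = 2 := by rw [hqdef]; field_simp
  have hpq : p * q = 2*q - 2 := by nlinarith [hq2]
  set A : ℝ := (m * β * (2-p)^2/2) ^ ((1:ℝ)/(2-p)) with hAdef
  have hA0 : 0 < A := Real.rpow_pos_of_pos (by positivity) _
  set B₀ : ℝ := (2*m*β) ^ ((1:ℝ)/(2-p)) with hB0def
  have hB00 : 0 < B₀ := Real.rpow_pos_of_pos (by positivity) _
  haveI hfin : IsFiniteMeasure (volume.restrict (Icc (0:ℝ) 1)) := ⟨by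
    rw [Measure.restrict_apply_univ, Real.volume_Icc]; exact ENNReal.ofReal_lt_top⟩
  have hg1 : IntegrableOn g (Icc 0 1) volume := hg2.integrable (by norm_num)
  have gsq_int : IntegrableOn (fun s => g s^2) (Icc 0 1) volume := hg2.integrable_sq
  set G : ℝ → ℝ := (Icc (0:ℝ) 1).indicator g with hGdef
  have hGint : Integrable G volume := (integrable_indicator_iff measurableSet_Icc).2 hg1
  have hfF : ∀ t ∈ Icc (0:ℝ) 1, f t = ∫ s in (0:ℝ)..t, G s := by
    intro t ht
    rw [hf t ht]
    apply intervalIntegral.integral_congr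
    intro s hs
    rw [uIcc_of_le ht.1] at hs
    show g s = G s
    have hmem : s ∈ Icc (0:ℝ) 1 := ⟨hs.1, le_trans hs.2 ht.2⟩
    rw [hGdef]
    exact (Set.indicator_of_mem hmem g).symm
  have hfc : ContinuousOn f (Icc 0 1) := by
    have hc : Continuous (fun t => ∫ s in (0:ℝ)..t, G s) := hGint.continuous_primitive 0
    exact (hc.continuousOn (s := Icc 0 1)).congr hfF
  have hf0 : f 0 = 0 := by rw [hf 0 (by norm_num)]; simp
  have habs : IntegrableOn (fun s => |f s|^p) (Icc 0 1) volume := by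
    apply ContinuousOn.integrableOn_compact isCompact_Icc
    exact (hfc.abs).rpow_const (fun x hx => Or.inr hp0)
  set D : ℝ → ℝ := fun s => 2*m*β*|f s|^p - g s^2 with hDdef
  have habsc : IntegrableOn (fun s => 2*m*β*|f s|^p) (Icc 0 1) volume := habs.const_mul _
  have hDicc : IntegrableOn D (Icc 0 1) volume := habsc.sub gsq_int
  have hDint : IntegrableOn D (Ioc 0 1) volume := hDicc.mono_set Ioc_subset_Icc_self
  -- rearranged form of hE
  have hgsq_le : ∀ x ∈ Icc (0:ℝ) 1, (∫ s in Ioc (0:ℝ) x, g s^2)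
      ≤ ∫ s in Ioc (0:ℝ) x, 2*m*β*|f s|^p := by
    intro x hx
    have hsub : Ioc (0:ℝ) x ⊆ Icc 0 1 := fun s hs => ⟨le_of_lt hs.1, le_trans hs.2 hx.2⟩
    have h1 : IntegrableOn (fun s => 2*m*β*|f s|^p) (Ioc 0 x) volume :=
      habsc.mono_set hsub
    have h2 : IntegrableOn (fun s => g s^2) (Ioc 0 x) volume := gsq_int.mono_set hsub
    have h3 := hE x hx
    rw [integral_sub h1 h2] at h3
    linarith
  -- crude bound
  have hcrude : ∀ t ∈ Icc (0:ℝ) 1, |f t| ≤ B₀ * t ^ q := by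
    intro t ht
    rcases eq_or_lt_of_le ht.1 with h0 | ht0
    · rw [← h0, hf0, abs_zero]
      positivity
    · obtain ⟨σ, hσmem, hσmax⟩ := isCompact_Icc.exists_isMaxOn
        (⟨0, le_rfl, le_of_lt ht0⟩ : (Icc (0:ℝ) t).Nonempty)
        ((hfc.mono (Icc_subset_Icc le_rfl ht.2)).abs)
      have hσ0 : 0 ≤ σ := hσmem.1
      have hσ1 : σ ≤ 1 := le_trans hσmem.2 ht.2
      have hsubσ : Ioc (0:ℝ) σ ⊆ Icc 0 1 := fun s hs => ⟨le_of_lt hs.1, le_trans hs.2 hσ1⟩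
      have hft : |f t| ≤ |f σ| := hσmax (⟨ht.1, le_rfl⟩ : t ∈ Icc (0:ℝ) t)
      haveI : IsFiniteMeasure (volume.restrict (Ioc (0:ℝ) σ)) := ⟨by
        rw [Measure.restrict_apply_univ, Real.volume_Ioc]; exact ENNReal.ofReal_lt_top⟩
      have hgm : MemLp (fun s => |g s|) 2 (volume.restrict (Ioc (0:ℝ) σ)) := by
        have h := hg2.mono_measure (Measure.restrict_mono hsubσ le_rfl)
        simpa [Real.norm_eq_abs] using h.norm
      have h1m : MemLp (fun _ : ℝ => (1:ℝ)) 2 (volume.restrict (Ioc (0:ℝ) σ)) := memLp_const 1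
      have hcs := CS2 (μ := volume.restrict (Ioc (0:ℝ) σ)) (fun _ => (1:ℝ)) (fun s => |g s|)
        (by filter_upwards with s using zero_le_one)
        (by filter_upwards with s using abs_nonneg _) h1m hgm
      have hint1 : (∫ _s in Ioc (0:ℝ) σ, ((1:ℝ))^2) = σ := by
        simp [Real.volume_Ioc, ENNReal.toReal_ofReal hσ0, hσ0]
      have hint2 : (∫ s in Ioc (0:ℝ) σ, |g s|^2) = ∫ s in Ioc (0:ℝ) σ, g s^2 := by
        apply MeasureTheory.integral_congr_ae
        filter_upwards with s using sq_abs _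
      have habsint : |f σ| ≤ ∫ s in Ioc (0:ℝ) σ, |g s| := by
        rw [hf σ ⟨hσ0, hσ1⟩, intervalIntegral.integral_of_le hσ0]
        simpa [Real.norm_eq_abs] using
          MeasureTheory.norm_integral_le_integral_norm (μ := volume.restrict (Ioc (0:ℝ) σ)) g
      have hIg : 0 ≤ ∫ s in Ioc (0:ℝ) σ, |g s| :=
        setIntegral_nonneg measurableSet_Ioc (fun s _ => abs_nonneg _)
      have hfσsq : |f σ|^2 ≤ σ * ∫ s in Ioc (0:ℝ) σ, g s^2 := by
        calc |f σ|^2 ≤ (∫ s in Ioc (0:ℝ) σ, |g s|)^2 := by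
              apply sq_le_sq' _ habsint
              have := abs_nonneg (f σ)
              linarith
          _ = (∫ s in Ioc (0:ℝ) σ, (1:ℝ) * |g s|)^2 := by simp
          _ ≤ (∫ _s in Ioc (0:ℝ) σ, ((1:ℝ))^2) * (∫ s in Ioc (0:ℝ) σ, |g s|^2) := hcs
          _ = σ * ∫ s in Ioc (0:ℝ) σ, g s^2 := by rw [hint1, hint2]
      have hgsq2 : (∫ s in Ioc (0:ℝ) σ, g s^2) ≤ 2*m*β*σ*|f σ|^p := by
        refine le_trans (hgsq_le σ ⟨hσ0, hσ1⟩) ?_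
        have hptw : ∀ s ∈ Ioc (0:ℝ) σ, 2*m*β*|f s|^p ≤ 2*m*β*|f σ|^p := by
          intro s hs
          have hle : |f s| ≤ |f σ| := hσmax (⟨le_of_lt hs.1, le_trans hs.2 hσmem.2⟩ : s ∈ Icc (0:ℝ) t)
          exact mul_le_mul_of_nonneg_left (Real.rpow_le_rpow (abs_nonneg _) hle hp0)
            (by positivity)
        calc (∫ s in Ioc (0:ℝ) σ, 2*m*β*|f s|^p)
            ≤ ∫ _s in Ioc (0:ℝ) σ, 2*m*β*|f σ|^p :=
              setIntegral_mono_on (habsc.mono_set hsubσ)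
                (integrableOn_const (by rw [Real.volume_Ioc]; exact ENNReal.ofReal_ne_top))
                measurableSet_Ioc hptw
          _ = σ * (2*m*β*|f σ|^p) := by
              rw [setIntegral_const, measureReal_def, Real.volume_Ioc, smul_eq_mul]
              rw [ENNReal.toReal_ofReal (by linarith)]
              ring_nf
          _ = 2*m*β*σ*|f σ|^p := by ring
      have hSp : 0 ≤ |f σ|^p := Real.rpow_nonneg (abs_nonneg _) p
      have hS2 : |f σ|^2 ≤ 2*m*β*t^2*|f σ|^p := by
        have h1 : σ * (∫ s in Ioc (0:ℝ) σ, g s^2) ≤ σ * (2*m*β*σ*|f σ|^p) :=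
          mul_le_mul_of_nonneg_left hgsq2 hσ0
        have hσt : σ ≤ t := hσmem.2
        have h2 : σ^2 ≤ t^2 := by nlinarith
        have h3 : σ^2 * |f σ|^p ≤ t^2 * |f σ|^p := mul_le_mul_of_nonneg_right h2 hSp
        nlinarith [mul_pos hm hβ]
      rcases eq_or_lt_of_le (abs_nonneg (f σ)) with hS0 | hS0
      · refine le_trans hft (le_trans (le_of_eq hS0.symm) (by positivity))
      · have h2mq : |f σ| ^ ((2:ℝ)-p) ≤ 2*m*β*t^2 := by
          have hSppos : 0 < |f σ|^p := Real.rpow_pos_of_pos hS0 _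
          have hsplit : |f σ| ^ ((2:ℝ)-p) * |f σ|^p = |f σ|^2 := by
            rw [← Real.rpow_add hS0]
            norm_num
          have : |f σ| ^ ((2:ℝ)-p) * |f σ|^p ≤ (2*m*β*t^2) * |f σ|^p := by
            rw [hsplit]; linarith
          exact le_of_mul_le_mul_right this hSppos
        have hmono := Real.rpow_le_rpow (Real.rpow_nonneg (abs_nonneg (f σ)) _) h2mq
          (le_of_lt (one_div_pos.2 h2p))
        rw [← Real.rpow_mul (abs_nonneg (f σ)), mul_one_div_cancel (ne_of_gt h2p),
          Real.rpow_one] at hmono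
        have hrhs : ((2*m*β*t^2) : ℝ) ^ ((1:ℝ)/(2-p)) = B₀ * t^q := by
          rw [Real.mul_rpow (by positivity) (sq_nonneg t), hB0def]
          congr 1
          rw [← Real.rpow_natCast t 2, ← Real.rpow_mul ht.1, hqdef]
          congr 1
          push_cast
          ring
        rw [hrhs] at hmono
        exact le_trans hft hmono
  -- improvement step
  have hrint : ∀ (r : ℝ), 0 ≤ r → ∀ (x y : ℝ), 0 ≤ x → y ≤ 1 →
      IntegrableOn (fun s : ℝ => s ^ (r:ℝ)) (Ioc x y) volume := by
    intro r hr x y hx hy1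
    haveI : IsFiniteMeasure (volume.restrict (Ioc x y)) := ⟨by
      rw [Measure.restrict_apply_univ, Real.volume_Ioc]; exact ENNReal.ofReal_lt_top⟩
    apply memLp_one_iff_integrable.1
    apply MemLp.of_bound ((measurable_id.pow_const _).aestronglyMeasurable) 1
    rw [ae_restrict_iff' measurableSet_Ioc]
    filter_upwards with s hs
    show ‖s ^ (r:ℝ)‖ ≤ 1
    rw [Real.norm_eq_abs, abs_of_nonneg (Real.rpow_nonneg (le_trans hx (le_of_lt hs.1)) _)]
    exact Real.rpow_le_one (le_trans hx (le_of_lt hs.1)) (le_trans hs.2 hy1) hr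
  have hstep : ∀ B : ℝ, 0 < B → (∀ s ∈ Icc (0:ℝ) 1, |f s| ≤ B * s ^ q) →
      ∀ t ∈ Icc (0:ℝ) 1, |f t| ≤ Real.sqrt ((2*m*β/q^2) * B^p) * t ^ q := by
    intro B hB hBnd t ht
    rcases eq_or_lt_of_le ht.1 with h0 | ht0
    · rw [← h0, hf0, abs_zero]
      positivity
    · set c : ℝ := 2*m*β*B^p/(q*p+1) with hcdef
      have hqp0 : 0 ≤ q*p := mul_nonneg (le_of_lt hq0) hp0
      have hqp1 : (0:ℝ) < q*p + 1 := by linarith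
      have hc0 : 0 ≤ c := by positivity
      have ht1 : t ≤ 1 := ht.2
      have hfp : ∀ s : ℝ, s ∈ Ioc (0:ℝ) 1 → |f s|^p ≤ B^p * s ^ (q*p) := by
        intro s hs
        have h1 : |f s| ≤ B * s^q := hBnd s ⟨le_of_lt hs.1, hs.2⟩
        calc |f s|^p ≤ (B * s^q)^p := Real.rpow_le_rpow (abs_nonneg _) h1 hp0
          _ = B^p * s ^ (q*p) := by
            rw [Real.mul_rpow (le_of_lt hB) (Real.rpow_nonneg (le_of_lt hs.1) _),
              ← Real.rpow_mul (le_of_lt hs.1)]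
      have hkey : ∀ ε : ℝ, ε ∈ Ioo (0:ℝ) t →
          (f t - f ε)^2 ≤ (t^q/q) * (2*m*β*B^p*(t^q/q) + c * ε ^ q) := by
        intro ε hεmem
        obtain ⟨hε0, hεt⟩ := hεmem
        have hεt' : ε ≤ t := le_of_lt hεt
        have hε1 : ε ≤ 1 := le_trans hεt' ht1
        have hsub1 : Ioc ε t ⊆ Icc (0:ℝ) 1 :=
          fun s hs => ⟨le_of_lt (lt_trans hε0 hs.1), le_trans hs.2 ht1⟩
        have hsub2 : Ioc ε t ⊆ Ioc (0:ℝ) 1 :=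
          fun s hs => ⟨lt_trans hε0 hs.1, le_trans hs.2 ht1⟩
        haveI : IsFiniteMeasure (volume.restrict (Ioc ε t)) := ⟨by
          rw [Measure.restrict_apply_univ, Real.volume_Ioc]; exact ENNReal.ofReal_lt_top⟩
        -- difference as integral
        have hii0t : IntervalIntegrable g volume 0 t := by
          rw [intervalIntegrable_iff, uIoc_of_le ht.1]
          exact hg1.mono_set (fun s hs => ⟨le_of_lt hs.1, le_trans hs.2 ht1⟩)
        have hii0ε : IntervalIntegrable g volume 0 ε := by
          rw [intervalIntegrable_iff, uIoc_of_le (le_of_lt hε0)]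
          exact hg1.mono_set (fun s hs => ⟨le_of_lt hs.1, le_trans hs.2 hε1⟩)
        have hdiff : f t - f ε = ∫ s in Ioc ε t, g s := by
          rw [hf t ht, hf ε ⟨le_of_lt hε0, hε1⟩,
            intervalIntegral.integral_interval_sub_left hii0t hii0ε,
            intervalIntegral.integral_of_le hεt']
        -- weighted Cauchy-Schwarz
        set u : ℝ → ℝ := fun s => s ^ (a/2 : ℝ) with hudef
        set v : ℝ → ℝ := fun s => |g s| * s ^ (-(a/2) : ℝ) with hvdef
        have hum : MemLp u 2 (volume.restrict (Ioc ε t)) := by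
          apply MemLp.of_bound ((measurable_id.pow_const _).aestronglyMeasurable) 1
          rw [ae_restrict_iff' measurableSet_Ioc]
          filter_upwards with s hs
          have hs0 : (0:ℝ) < s := lt_trans hε0 hs.1
          show ‖s ^ (a/2:ℝ)‖ ≤ 1
          rw [Real.norm_eq_abs, abs_of_nonneg (Real.rpow_nonneg (le_of_lt hs0) _)]
          exact Real.rpow_le_one (le_of_lt hs0) (le_trans hs.2 ht1) (by positivity)
        have hgm : MemLp (fun s => |g s|) 2 (volume.restrict (Ioc ε t)) := by
          have h := hg2.mono_measure (Measure.restrict_mono hsub1 le_rfl)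
          simpa [Real.norm_eq_abs] using h.norm
        have hvm : MemLp v 2 (volume.restrict (Ioc ε t)) := by
          apply MemLp.of_le (hgm.const_mul (ε ^ (-(a/2):ℝ)))
            (hgm.aestronglyMeasurable.mul ((measurable_id.pow_const _).aestronglyMeasurable))
          rw [ae_restrict_iff' measurableSet_Ioc]
          filter_upwards with s hs
          have hs0 : (0:ℝ) < s := lt_trans hε0 hs.1
          have hw : s ^ (-(a/2):ℝ) ≤ ε ^ (-(a/2):ℝ) :=
            Real.rpow_le_rpow_of_nonpos hε0 (le_of_lt hs.1) (by linarith [ha])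
          have h1 : (0:ℝ) ≤ s ^ (-(a/2):ℝ) := Real.rpow_nonneg (le_of_lt hs0) _
          have h2 : (0:ℝ) ≤ ε ^ (-(a/2):ℝ) := Real.rpow_nonneg (le_of_lt hε0) _
          show ‖|g s| * s ^ (-(a/2):ℝ)‖ ≤ ‖ε ^ (-(a/2):ℝ) * |g s|‖
          rw [Real.norm_eq_abs, Real.norm_eq_abs, abs_mul, abs_abs, abs_mul, abs_abs,
            abs_of_nonneg h1, abs_of_nonneg h2, mul_comm (ε ^ (-(a/2):ℝ)) _]
          exact mul_le_mul_of_nonneg_left hw (abs_nonneg _)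
        have hcs := CS2 (μ := volume.restrict (Ioc ε t)) u v
          (by filter_upwards [ae_restrict_mem measurableSet_Ioc] with s hs
              exact Real.rpow_nonneg (le_of_lt (lt_trans hε0 hs.1)) _)
          (by filter_upwards [ae_restrict_mem measurableSet_Ioc] with s hs
              exact mul_nonneg (abs_nonneg _) (Real.rpow_nonneg (le_of_lt (lt_trans hε0 hs.1)) _))
          hum hvm
        have huv : (∫ s in Ioc ε t, u s * v s) = ∫ s in Ioc ε t, |g s| := by
          apply setIntegral_congr_fun measurableSet_Ioc
          intro s hs
          have hs0 : (0:ℝ) < s := lt_trans hε0 hs.1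
          show u s * v s = |g s|
          rw [hudef, hvdef]
          have h5 : (s ^ (a/2:ℝ)) * (|g s| * s ^ (-(a/2):ℝ))
              = |g s| * (s ^ (a/2:ℝ) * s ^ (-(a/2):ℝ)) := by ring
          rw [h5, ← Real.rpow_add hs0]
          norm_num
        have hu2 : (∫ s in Ioc ε t, u s^2) = ∫ s in Ioc ε t, s ^ (a:ℝ) := by
          apply setIntegral_congr_fun measurableSet_Ioc
          intro s hs
          have hs0 : (0:ℝ) < s := lt_trans hε0 hs.1
          show u s ^ 2 = s ^ (a:ℝ)
          rw [hudef, ← Real.rpow_natCast (s ^ (a/2:ℝ)) 2, ← Real.rpow_mul (le_of_lt hs0)]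
          norm_num
        have hv2 : (∫ s in Ioc ε t, v s^2) = ∫ s in Ioc ε t, g s^2 * s ^ (-a:ℝ) := by
          apply setIntegral_congr_fun measurableSet_Ioc
          intro s hs
          have hs0 : (0:ℝ) < s := lt_trans hε0 hs.1
          show v s ^ 2 = g s ^2 * s ^ (-a:ℝ)
          rw [hvdef, mul_pow, sq_abs, ← Real.rpow_natCast (s ^ (-(a/2):ℝ)) 2,
            ← Real.rpow_mul (le_of_lt hs0)]
          norm_num
        have hia : (∫ s in Ioc ε t, s ^ (a:ℝ)) ≤ t^q/q := by
          rw [← intervalIntegral.integral_of_le hεt',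
            integral_rpow (Or.inl (by linarith : (-1:ℝ) < a))]
          have hq_eq : a + 1 = q := by rw [hadef]; ring
          rw [hq_eq]
          have h1 : 0 ≤ ε ^ q := Real.rpow_nonneg (le_of_lt hε0) _
          gcongr
          linarith
        have hwmeas2 : AEStronglyMeasurable (fun s : ℝ => s ^ (-a:ℝ)) (volume.restrict (Ioc ε t)) :=
          (measurable_id.pow_const _).aestronglyMeasurable
        have hwbdd2 : ∀ᵐ s ∂(volume.restrict (Ioc ε t)), ‖s ^ (-a:ℝ)‖ ≤ ε ^ (-a:ℝ) := by
          rw [ae_restrict_iff' measurableSet_Ioc]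
          filter_upwards with s hs
          rw [Real.norm_eq_abs, abs_of_nonneg (Real.rpow_nonneg (le_of_lt (lt_trans hε0 hs.1)) _)]
          exact Real.rpow_le_rpow_of_nonpos hε0 (le_of_lt hs.1) (neg_nonpos.2 ha)
        have hgsqw : IntegrableOn (fun s => g s^2 * s ^ (-a:ℝ)) (Ioc ε t) volume := by
          have h := Integrable.bdd_mul (f := fun s : ℝ => s ^ (-a:ℝ))
            (g := fun s => g s^2) (gsq_int.mono_set hsub1) hwmeas2 hwbdd2
          exact h.congr (by filter_upwards with s using mul_comm _ _)
        have hfpw : IntegrableOn (fun s => 2*m*β*|f s|^p * s ^ (-a:ℝ)) (Ioc ε t) volume := by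
          have h := Integrable.bdd_mul (f := fun s : ℝ => s ^ (-a:ℝ))
            (g := fun s => 2*m*β*|f s|^p) (habsc.mono_set hsub1) hwmeas2 hwbdd2
          exact h.congr (by filter_upwards with s using mul_comm _ _)
        have hwi := weighted_ineq a ε t ha hε0 hεt' ht1 D hDint hE
        have hDsplit : (∫ s in Ioc ε t, D s * s ^ (-a:ℝ))
            = (∫ s in Ioc ε t, 2*m*β*|f s|^p * s ^ (-a:ℝ)) - ∫ s in Ioc ε t, g s^2 * s ^ (-a:ℝ) := by
          rw [← integral_sub hfpw hgsqw]
          apply setIntegral_congr_fun measurableSet_Ioc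
          intro s hs
          show D s * s ^ (-a:ℝ) = _
          rw [hDdef]
          ring
        have hsa_int : IntegrableOn (fun s : ℝ => s ^ (a:ℝ)) (Ioc ε t) volume :=
          hrint a ha ε t (le_of_lt hε0) ht1
        have hpq' : q * p = 2*q - 2 := by rw [mul_comm]; exact hpq
        have hfw : (∫ s in Ioc ε t, 2*m*β*|f s|^p * s ^ (-a:ℝ)) ≤ 2*m*β*B^p*(t^q/q) := by
          have hptw : ∀ s ∈ Ioc ε t, 2*m*β*|f s|^p * s ^ (-a:ℝ) ≤ (2*m*β*B^p) * s ^ (a:ℝ) := by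
            intro s hs
            have hs0 : (0:ℝ) < s := lt_trans hε0 hs.1
            have h1 : |f s|^p ≤ B^p * s ^ (q*p) := hfp s (hsub2 hs)
            have h2 : (0:ℝ) ≤ s ^ (-a:ℝ) := Real.rpow_nonneg (le_of_lt hs0) _
            have h3 : 2*m*β*|f s|^p * s ^ (-a:ℝ) ≤ 2*m*β*(B^p * s ^ (q*p)) * s ^ (-a:ℝ) := by
              apply mul_le_mul_of_nonneg_right _ h2
              exact mul_le_mul_of_nonneg_left h1 (by positivity)
            refine h3.trans (le_of_eq ?_)
            have h4 : s ^ (q*p) * s ^ (-a:ℝ) = s ^ (a:ℝ) := by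
              rw [← Real.rpow_add hs0]
              congr 1
              rw [hadef]
              linarith
            calc 2*m*β*(B^p * s ^ (q*p)) * s ^ (-a:ℝ)
                = (2*m*β*B^p) * (s ^ (q*p) * s ^ (-a:ℝ)) := by ring
              _ = (2*m*β*B^p) * s ^ (a:ℝ) := by rw [h4]
          calc (∫ s in Ioc ε t, 2*m*β*|f s|^p * s ^ (-a:ℝ))
              ≤ ∫ s in Ioc ε t, (2*m*β*B^p) * s ^ (a:ℝ) :=
                setIntegral_mono_on hfpw (hsa_int.const_mul _) measurableSet_Ioc hptw
            _ = (2*m*β*B^p) * ∫ s in Ioc ε t, s ^ (a:ℝ) := MeasureTheory.integral_const_mul _ _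
            _ ≤ (2*m*β*B^p) * (t^q/q) := mul_le_mul_of_nonneg_left hia (by positivity)
            _ = 2*m*β*B^p*(t^q/q) := by ring
        have hv2b : (∫ s in Ioc ε t, g s^2 * s ^ (-a:ℝ))
            ≤ 2*m*β*B^p*(t^q/q) + (∫ s in Ioc (0:ℝ) ε, D s) * ε ^ (-a:ℝ) := by
          rw [hDsplit] at hwi
          linarith
        have hEεb : (∫ s in Ioc (0:ℝ) ε, D s) * ε ^ (-a:ℝ) ≤ c * ε ^ q := by
          have hqpint : IntegrableOn (fun s : ℝ => s ^ (q*p:ℝ)) (Ioc 0 ε) volume :=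
            hrint (q*p) hqp0 0 ε le_rfl hε1
          have h1 : (∫ s in Ioc (0:ℝ) ε, D s) ≤ ∫ s in Ioc (0:ℝ) ε, (2*m*β*B^p) * s ^ (q*p) := by
            apply setIntegral_mono_on (hDint.mono_set (fun s hs => ⟨hs.1, le_trans hs.2 hε1⟩))
              (hqpint.const_mul _) measurableSet_Ioc
            intro s hs
            have h2 := hfp s ⟨hs.1, le_trans hs.2 hε1⟩
            have h3 : 2*m*β*|f s|^p ≤ 2*m*β*(B^p * s ^ (q*p)) :=
              mul_le_mul_of_nonneg_left h2 (by positivity)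
            show 2*m*β*|f s|^p - g s^2 ≤ (2*m*β*B^p) * s ^ (q*p)
            nlinarith [sq_nonneg (g s)]
          have h2 : (∫ s in Ioc (0:ℝ) ε, (2*m*β*B^p) * s ^ (q*p))
              = (2*m*β*B^p) * (ε ^ (q*p+1))/(q*p+1) := by
            rw [MeasureTheory.integral_const_mul, ← intervalIntegral.integral_of_le (le_of_lt hε0),
              integral_rpow (Or.inl (by linarith : (-1:ℝ) < q*p)),
              Real.zero_rpow (by linarith : q*p+1 ≠ 0)]
            ring
          have hεa : (0:ℝ) ≤ ε ^ (-a:ℝ) := Real.rpow_nonneg (le_of_lt hε0) _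
          have he : ε ^ (q*p+1) * ε ^ (-a:ℝ) = ε ^ q := by
            rw [← Real.rpow_add hε0]
            congr 1
            rw [hadef]
            linarith
          calc (∫ s in Ioc (0:ℝ) ε, D s) * ε ^ (-a:ℝ)
              ≤ ((2*m*β*B^p) * (ε ^ (q*p+1))/(q*p+1)) * ε ^ (-a:ℝ) :=
                mul_le_mul_of_nonneg_right (h1.trans_eq h2) hεa
            _ = c * (ε ^ (q*p+1) * ε ^ (-a:ℝ)) := by rw [hcdef]; ring
            _ = c * ε ^ q := by rw [he]
        have hv2nn : 0 ≤ ∫ s in Ioc ε t, g s^2 * s ^ (-a:ℝ) := by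
          apply setIntegral_nonneg measurableSet_Ioc
          intro s hs
          exact mul_nonneg (sq_nonneg _) (Real.rpow_nonneg (le_of_lt (lt_trans hε0 hs.1)) _)
        have hgabs : |∫ s in Ioc ε t, g s| ≤ ∫ s in Ioc ε t, |g s| := by
          simpa [Real.norm_eq_abs] using
            MeasureTheory.norm_integral_le_integral_norm (μ := volume.restrict (Ioc ε t)) g
        have habs2 : (f t - f ε)^2
            ≤ (∫ s in Ioc ε t, s ^ (a:ℝ)) * (∫ s in Ioc ε t, g s^2 * s ^ (-a:ℝ)) := by
          rw [hdiff]
          calc (∫ s in Ioc ε t, g s)^2 ≤ (∫ s in Ioc ε t, |g s|)^2 := by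
                apply sq_le_sq'
                · linarith [(abs_le.1 hgabs).1]
                · linarith [(abs_le.1 hgabs).2]
            _ = (∫ s in Ioc ε t, u s * v s)^2 := by rw [huv]
            _ ≤ (∫ s in Ioc ε t, u s^2) * (∫ s in Ioc ε t, v s^2) := hcs
            _ = (∫ s in Ioc ε t, s ^ (a:ℝ)) * (∫ s in Ioc ε t, g s^2 * s ^ (-a:ℝ)) := by
                rw [hu2, hv2]
        calc (f t - f ε)^2
            ≤ (∫ s in Ioc ε t, s ^ (a:ℝ)) * (∫ s in Ioc ε t, g s^2 * s ^ (-a:ℝ)) := habs2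
          _ ≤ (t^q/q) * (2*m*β*B^p*(t^q/q) + c * ε ^ q) := by
              apply mul_le_mul hia (by linarith) hv2nn (by positivity)
      -- take the limit ε → 0⁺
      haveI hnb : (𝓝[Ioo (0:ℝ) t] (0:ℝ)).NeBot := by
        apply mem_closure_iff_nhdsWithin_neBot.1
        rw [closure_Ioo (ne_of_lt ht0)]
        exact ⟨le_rfl, le_of_lt ht0⟩
      have hlhs : Tendsto (fun ε => (f t - f ε)^2) (𝓝[Ioo (0:ℝ) t] (0:ℝ)) (𝓝 ((f t)^2)) := by
        have hcf : Tendsto f (𝓝[Ioo (0:ℝ) t] (0:ℝ)) (𝓝 0) := by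
          have h := (hfc 0 ⟨le_rfl, zero_le_one⟩).mono_left
            (nhdsWithin_mono 0 (show Ioo (0:ℝ) t ⊆ Icc (0:ℝ) 1 from
              fun s hs => ⟨le_of_lt hs.1, le_trans (le_of_lt hs.2) ht.2⟩))
          rwa [hf0] at h
        have h2 : Tendsto (fun ε => f t - f ε) (𝓝[Ioo (0:ℝ) t] (0:ℝ)) (𝓝 (f t - 0)) :=
          tendsto_const_nhds.sub hcf
        have h3 := h2.pow 2
        simpa using h3
      have hrhs : Tendsto (fun ε : ℝ => (t^q/q) * (2*m*β*B^p*(t^q/q) + c * ε ^ q))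
          (𝓝[Ioo (0:ℝ) t] (0:ℝ)) (𝓝 ((t^q/q) * (2*m*β*B^p*(t^q/q) + c * 0))) := by
        have h1 : Tendsto (fun ε : ℝ => ε ^ q) (𝓝[Ioo (0:ℝ) t] (0:ℝ)) (𝓝 0) := by
          have h := (Real.continuousAt_rpow_const 0 q (Or.inr (le_of_lt hq0))).tendsto
          rw [Real.zero_rpow (ne_of_gt hq0)] at h
          exact h.mono_left nhdsWithin_le_nhds
        exact (((h1.const_mul c).const_add (2*m*β*B^p*(t^q/q))).const_mul (t^q/q))
      have hle : (f t)^2 ≤ (t^q/q) * (2*m*β*B^p*(t^q/q) + c * 0) :=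
        le_of_tendsto_of_tendsto hlhs hrhs
          (by filter_upwards [self_mem_nhdsWithin] with ε hε using hkey ε hε)
      have hsimp : (t^q/q) * (2*m*β*B^p*(t^q/q) + c * 0) = ((2*m*β/q^2) * B^p) * (t^q)^2 := by
        field_simp
        ring
      rw [hsimp] at hle
      have hfin2 := Real.sqrt_le_sqrt hle
      rw [Real.sqrt_sq_eq_abs] at hfin2
      rw [Real.sqrt_mul (by positivity) ((t^q)^2), Real.sqrt_sq (Real.rpow_nonneg ht.1 _)] at hfin2
      exact hfin2

  -- iteration
  have hiter : ∀ n : ℕ, ∀ t ∈ Icc (0:ℝ) 1, |f t| ≤ (A * (B₀/A) ^ (((p/2)^n : ℝ))) * t ^ q := by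
    intro n
    induction n with
    | zero =>
      intro t ht
      have : A * (B₀/A) ^ (((p/2)^0 : ℝ)) = B₀ := by
        rw [pow_zero, Real.rpow_one, mul_comm, div_mul_cancel₀ _ (ne_of_gt hA0)]
      rw [this]
      exact hcrude t ht
    | succ n ih =>
      have hBpos : 0 < A * (B₀/A) ^ (((p/2)^n : ℝ)) := by positivity
      have h := hstep _ hBpos ih
      intro t ht
      refine le_trans (h t ht) (mul_le_mul_of_nonneg_right (le_of_eq ?_) (Real.rpow_nonneg ht.1 q))
      -- sqrt ((2mβ/q²)·(A·Y^e)^p) = A·Y^{e·(p/2)}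
      set Y : ℝ := B₀/A with hYdef
      have hY0 : 0 < Y := by positivity
      set e : ℝ := ((p/2)^n : ℝ) with hedef
      have hK : 2*m*β/q^2 = m * β * (2-p)^2/2 := by
        rw [hqdef]; field_simp
      have hKA : 2*m*β/q^2 = A ^ ((2-p) : ℝ) := by
        rw [hK, hAdef, ← Real.rpow_mul (by positivity), one_div_mul_cancel (ne_of_gt h2p),
          Real.rpow_one]
      have e1 : (A * Y ^ e) ^ p = A ^ p * Y ^ (e * p) := by
        rw [Real.mul_rpow (le_of_lt hA0) (Real.rpow_nonneg (le_of_lt hY0) _),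
          ← Real.rpow_mul (le_of_lt hY0)]
      have e2 : (2*m*β/q^2) * (A * Y ^ e) ^ p = A^2 * Y ^ (e * p) := by
        rw [e1, hKA, ← mul_assoc, ← Real.rpow_add hA0]
        norm_num
      rw [e2, Real.sqrt_mul (by positivity), Real.sqrt_sq (le_of_lt hA0),
        Real.sqrt_eq_rpow, ← Real.rpow_mul (le_of_lt hY0)]
      congr 1
      rw [hedef]
      ring
  -- limit
  have hfin1 : ∀ n : ℕ, |f 1| ≤ A * (B₀/A) ^ (((p/2)^n : ℝ)) := by
    intro n
    have h := hiter n 1 ⟨zero_le_one, le_rfl⟩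
    rwa [Real.one_rpow, mul_one] at h
  have hlim : Tendsto (fun n : ℕ => A * (B₀/A) ^ (((p/2)^n : ℝ))) atTop (𝓝 A) := by
    have h1 : Tendsto (fun n : ℕ => (((p/2)^n : ℝ))) atTop (𝓝 0) :=
      tendsto_pow_atTop_nhds_zero_of_lt_one (by linarith) (by linarith)
    have h2 : Tendsto (fun x : ℝ => (B₀/A) ^ x) (𝓝 0) (𝓝 1) := by
      have hc : ContinuousAt (fun x : ℝ => (B₀/A) ^ x) 0 :=
        Real.continuousAt_const_rpow (by positivity)
      simpa [Real.rpow_zero] using hc.tendsto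
    have h3 := (h2.comp h1).const_mul A
    simpa using h3
  exact ge_of_tendsto' hlim hfin1

theorem stmt4 (m β p : ℝ) (hm : 0 < m) (hβ : 0 < β) (hp0 : 0 ≤ p) (hp2 : p < 2)
    (f : ℝ → ℝ) (hH1 : InH1 f) (hf1 : zbar m β p < |f 1|) :
    ∃ θ ∈ Icc (0:ℝ) 1, K m β p f θ < 0 := by
  by_contra hcon
  push_neg at hcon
  obtain ⟨g, hg2, hf⟩ := hH1
  haveI hfin : IsFiniteMeasure (volume.restrict (Icc (0:ℝ) 1)) := ⟨by
    rw [Measure.restrict_apply_univ, Real.volume_Icc]; exact ENNReal.ofReal_lt_top⟩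
  have hg1 : IntegrableOn g (Icc 0 1) volume := hg2.integrable (by norm_num)
  set G : ℝ → ℝ := (Icc (0:ℝ) 1).indicator g with hGdef
  have hGint : Integrable G volume := (integrable_indicator_iff measurableSet_Icc).2 hg1
  have hfF : Set.EqOn f (fun t => ∫ s in (0:ℝ)..t, G s) (Icc 0 1) := by
    intro t ht
    rw [hf t ht]
    apply intervalIntegral.integral_congr
    intro s hs
    rw [uIcc_of_le ht.1] at hs
    have hmem : s ∈ Icc (0:ℝ) 1 := ⟨hs.1, le_trans hs.2 ht.2⟩
    rw [hGdef]
    exact (Set.indicator_of_mem hmem g).symm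
  have hae : derivWithin f (Icc (0:ℝ) 1) =ᵐ[volume.restrict (Icc (0:ℝ) 1)] g := by
    have hFd := ae_hasDerivAt_primitive G hGint
    rw [← Measure.restrict_congr_set Ioo_ae_eq_Icc]
    rw [EventuallyEq, ae_restrict_iff' measurableSet_Ioo]
    filter_upwards [hFd] with x hx
    intro hxmem
    have hxIcc : x ∈ Icc (0:ℝ) 1 := ⟨le_of_lt hxmem.1, le_of_lt hxmem.2⟩
    have hGx : G x = g x := by rw [hGdef]; exact Set.indicator_of_mem hxIcc g
    have hder : HasDerivWithinAt f (g x) (Icc (0:ℝ) 1) x := by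
      have h1 : HasDerivWithinAt (fun t => ∫ s in (0:ℝ)..t, G s) (G x) (Icc (0:ℝ) 1) x :=
        hx.hasDerivWithinAt
      rw [hGx] at h1
      exact h1.congr (fun y hy => hfF hy) (hfF hxIcc)
    exact hder.derivWithin (uniqueDiffOn_Icc_zero_one x hxIcc)
  set h : ℝ → ℝ := derivWithin f (Icc (0:ℝ) 1) with hhdef
  have hh2 : MemLp h 2 (volume.restrict (Icc (0:ℝ) 1)) := hg2.ae_eq hae.symm
  have hfh : ∀ t ∈ Icc (0:ℝ) 1, f t = ∫ s in (0:ℝ)..t, h s := by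
    intro t ht
    rw [hf t ht, intervalIntegral.integral_of_le ht.1, intervalIntegral.integral_of_le ht.1]
    apply MeasureTheory.integral_congr_ae
    have hsub : Ioc (0:ℝ) t ⊆ Icc (0:ℝ) 1 := fun s hs => ⟨le_of_lt hs.1, le_trans hs.2 ht.2⟩
    exact ae_restrict_of_ae_restrict_of_subset hsub hae.symm
  have hE : ∀ x ∈ Icc (0:ℝ) 1, 0 ≤ ∫ s in Ioc (0:ℝ) x, (2*m*β*|f s|^p - h s^2) := by
    intro x hx
    have h1 := hcon x hx
    have hKx : K m β p f x = ∫ s in Ioc (0:ℝ) x, (m*β*|f s|^p - (1/2)*(h s)^2) := by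
      rw [K, intervalIntegral.integral_of_le hx.1]
    rw [hKx] at h1
    have h2 : (∫ s in Ioc (0:ℝ) x, (2*m*β*|f s|^p - h s^2))
        = 2 * ∫ s in Ioc (0:ℝ) x, (m*β*|f s|^p - (1/2)*(h s)^2) := by
      rw [← MeasureTheory.integral_const_mul 2]
      apply MeasureTheory.integral_congr_ae
      filter_upwards with s
      ring
    rw [h2]
    linarith
  have hb := main_bound m β p hm hβ hp0 hp2 f h hh2 hfh hE
  rw [zbar, rPath] at hf1
  have heq : (m * β * 1^2 / 2 * (2-p)^2 : ℝ) = m*β*(2-p)^2/2 := by ring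
  rw [heq] at hf1
  linarith
end

section
/- Let f : [0,1] → ℝ be piecewise C², nonnegative, with f ∈ H¹, and suppose K(f,θ) ≥ 0 for all θ ∈ [0,1]. Then f(s) ≤ r(s) for all s ∈ [0,1]. -/
open MeasureTheory Set

set_option maxHeartbeats 1000000 in
theorem stmt13 (m β p : ℝ) (hm : 0 < m) (hβ : 0 < β) (hp0 : 0 ≤ p) (hp2 : p < 2)
    (f : ℝ → ℝ) (hpc : PiecewiseC2 f) (hnonneg : ∀ s ∈ Icc (0:ℝ) 1, 0 ≤ f s)
    (hH1 : InH1 f) (hcon : ∀ θ ∈ Icc (0:ℝ) 1, 0 ≤ K m β p f θ) :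
    ∀ s ∈ Icc (0:ℝ) 1, f s ≤ rPath m β p s := by
  have hpc' : ∃ (n : ℕ) (x : Fin (n + 1) → ℝ), x 0 = 0 ∧ x (Fin.last n) = 1 ∧ StrictMono x ∧
      ∀ i : Fin n, ContDiffOn ℝ 2 f (Icc (x i.castSucc) (x i.succ)) := hpc
  have hH1' : ∃ g : ℝ → ℝ, MemLp g 2 (volume.restrict (Icc (0:ℝ) 1)) ∧
      ∀ t ∈ Icc (0:ℝ) 1, f t = ∫ s in (0:ℝ)..t, g s := hH1
  have hcon' : ∀ θ ∈ Icc (0:ℝ) 1, 0 ≤ ∫ s in (0:ℝ)..θ,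
      (m * β * |f s| ^ p - (1/2) * (derivWithin f (Icc (0:ℝ) 1) s) ^ 2) := hcon
  clear hpc hH1 hcon
  rename' hpc' => hpc, hH1' => hH1, hcon' => hcon
  have hgoal : ∀ s ∈ Icc (0:ℝ) 1,
      f s ≤ (m * β * s ^ 2 / 2 * (2 - p) ^ 2) ^ ((1:ℝ) / (2 - p)) := by
    classical
    obtain ⟨n, x, hx0, hxl, hxm, hxc2⟩ := hpc
    obtain ⟨g, hg2, hgint⟩ := hH1
    have hf0 : f 0 = 0 := by
      have := hgint 0 ⟨le_rfl, zero_le_one⟩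
      simpa using this
    have hfc : ContinuousOn f (Icc (0:ℝ) 1) := by
      have hgI : IntervalIntegrable g volume 0 1 := by
        have hfin : IsFiniteMeasure (volume.restrict (Icc (0:ℝ) 1)) := by
          constructor
          simp [Measure.restrict_apply_univ]
        have h' : IntegrableOn g (Icc (0:ℝ) 1) := hg2.integrable (by norm_num)
        have h'' : IntegrableOn g (uIcc (0:ℝ) 1) := by rwa [uIcc_of_le zero_le_one]
        exact h''.intervalIntegrable
      have hc1 : ContinuousOn (fun t => ∫ s in (0:ℝ)..t, g s) (Icc (0:ℝ) 1) := by
        have := intervalIntegral.continuousOn_primitive_interval' hgI left_mem_uIcc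
        rwa [uIcc_of_le zero_le_one] at this
      exact hc1.congr hgint
    have h2p : (0:ℝ) < 2 + p := by linarith
    have hp2' : (0:ℝ) < 2 - p := by linarith
    set sq : ℝ := Real.sqrt (2*m*β) with hsqdef
    have hsq : 0 < sq := Real.sqrt_pos.2 (by positivity)
    have hsq2 : sq ^ 2 = 2*m*β := Real.sq_sqrt (by positivity)
    set c : ℝ := (2+p)/2 * sq with hcdef
    have hc : 0 < c := by positivity
    set κ : ℝ := (2-p)/(2+p) with hκdef
    have hκ : 0 < κ := by positivity
    set q : ℝ := 2*p/(2+p) with hqdef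
    have hq0 : 0 ≤ q := by positivity
    set L : ℝ := κ * c ^ q with hLdef
    have hL : 0 < L := mul_pos hκ (Real.rpow_pos_of_pos hc q)
    set D : ℝ → ℝ := fun s => derivWithin f (Icc (0:ℝ) 1) s with hDdef
    set dR : ℝ → ℝ := fun s => derivWithin f (Icc s 1) s with hdRdef
    set u : ℝ → ℝ := fun s => (f s) ^ p with hudef
    set B : ℝ → ℝ := fun t => ∫ s in (0:ℝ)..t, u s with hBdef
    -- basic structure facts
    have hnpos : 0 < n := by
      rcases Nat.eq_zero_or_pos n with h | h
      · exfalso; subst h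
        have : x 0 = x (Fin.last 0) := rfl
        rw [hx0, hxl] at this; norm_num at this
      · exact h
    have hxmem : ∀ i : Fin (n+1), x i ∈ Icc (0:ℝ) 1 := by
      intro i
      constructor
      · rw [← hx0]; exact hxm.monotone (Fin.zero_le i)
      · rw [← hxl]; exact hxm.monotone (Fin.le_last i)
    have hcover : ∀ t ∈ Ico (0:ℝ) 1, ∃ i : Fin n, x i.castSucc ≤ t ∧ t < x i.succ := by
      intro t ht
      set S : Finset (Fin (n+1)) := Finset.univ.filter (fun j => x j ≤ t) with hSdef
      have hS0 : (0 : Fin (n+1)) ∈ S := by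
        simp only [hSdef, Finset.mem_filter, Finset.mem_univ, true_and, hx0]
        exact ht.1
      have hSne : S.Nonempty := ⟨0, hS0⟩
      set j := S.max' hSne with hjdef
      have hjS : j ∈ S := S.max'_mem hSne
      have hjle : x j ≤ t := by
        simpa only [hSdef, Finset.mem_filter, Finset.mem_univ, true_and] using hjS
      have hjlt : (j : ℕ) < n := by
        by_contra h
        have hj : j = Fin.last n := by
          apply Fin.ext
          simp only [Fin.val_last]
          omega
        rw [hj, hxl] at hjle
        exact absurd hjle (not_le.2 ht.2)
      refine ⟨⟨(j : ℕ), hjlt⟩, ?_, ?_⟩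
      · have hcs : (⟨(j : ℕ), hjlt⟩ : Fin n).castSucc = j := by
          apply Fin.ext; simp
        rw [hcs]; exact hjle
      · by_contra h
        push_neg at h
        have hmem : (⟨(j : ℕ), hjlt⟩ : Fin n).succ ∈ S := by
          simp only [hSdef, Finset.mem_filter, Finset.mem_univ, true_and]
          exact h
        have hle := S.le_max' _ hmem
        rw [← hjdef] at hle
        have : (((⟨(j : ℕ), hjlt⟩ : Fin n).succ : Fin (n+1)) : ℕ) = (j : ℕ) + 1 := rfl
        have hv := (Fin.le_def.1 hle)
        omega
    have hcoverIcc : ∀ t ∈ Icc (0:ℝ) 1, ∃ i : Fin n, t ∈ Icc (x i.castSucc) (x i.succ) := by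
      intro t ht
      rcases eq_or_lt_of_le ht.2 with h1 | h1
      · refine ⟨⟨n-1, by omega⟩, ?_, ?_⟩
        · have : x (⟨n-1, by omega⟩ : Fin n).castSucc ≤ 1 := (hxmem _).2
          rw [h1]; exact this
        · have hsucc : (⟨n-1, by omega⟩ : Fin n).succ = Fin.last n := by
            apply Fin.ext; simp; omega
          rw [hsucc, hxl, h1]
      · obtain ⟨i, hi1, hi2⟩ := hcover t ⟨ht.1, h1⟩
        exact ⟨i, hi1, hi2.le⟩
    -- from H1
    have hucont : ContinuousOn u (Icc (0:ℝ) 1) :=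
      hfc.rpow_const (fun s _ => Or.inr hp0)
    have huint : IntegrableOn u (Icc (0:ℝ) 1) := hucont.integrableOn_Icc
    have hDpiece : ∀ i : Fin n, ∀ s ∈ Ioo (x i.castSucc) (x i.succ),
        DifferentiableAt ℝ f s ∧ D s = deriv f s ∧ dR s = deriv f s := by
      intro i s hs
      have hab : x i.castSucc < x i.succ := hxm Fin.castSucc_lt_succ
      have hnb : Icc (x i.castSucc) (x i.succ) ∈ nhds s := Icc_mem_nhds hs.1 hs.2
      have hd : DifferentiableWithinAt ℝ f (Icc (x i.castSucc) (x i.succ)) s :=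
        (hxc2 i).differentiableOn two_ne_zero s (Ioo_subset_Icc_self hs)
      have hda : DifferentiableAt ℝ f s := hd.differentiableAt hnb
      have hs01 : s ∈ Ioo (0:ℝ) 1 :=
        ⟨lt_of_le_of_lt (hxmem _).1 hs.1, lt_of_lt_of_le hs.2 (hxmem _).2⟩
      refine ⟨hda, ?_, ?_⟩
      · exact derivWithin_of_mem_nhds (Icc_mem_nhds hs01.1 hs01.2)
      · exact hda.derivWithin ((uniqueDiffOn_Icc hs01.2).uniqueDiffWithinAt
          (left_mem_Icc.2 hs01.2.le))
    have hD2int : IntegrableOn (fun s => D s ^ 2) (Icc (0:ℝ) 1) := by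
      have hpiece : ∀ i : Fin n, IntegrableOn (fun s => D s ^ 2)
          (Icc (x i.castSucc) (x i.succ)) := by
        intro i
        have hab : x i.castSucc < x i.succ := hxm Fin.castSucc_lt_succ
        have hgi : ContinuousOn
            (fun s => derivWithin f (Icc (x i.castSucc) (x i.succ)) s ^ 2)
            (Icc (x i.castSucc) (x i.succ)) :=
          ((hxc2 i).continuousOn_derivWithin (uniqueDiffOn_Icc hab) one_le_two).pow 2
        have hint : IntegrableOn
            (fun s => derivWithin f (Icc (x i.castSucc) (x i.succ)) s ^ 2)
            (Icc (x i.castSucc) (x i.succ)) := hgi.integrableOn_Icc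
        apply hint.congr
        have hae : ∀ᵐ s ∂(volume.restrict (Icc (x i.castSucc) (x i.succ))),
            s ∈ Ioo (x i.castSucc) (x i.succ) := by
          rw [← Measure.restrict_congr_set Ioo_ae_eq_Icc]
          exact ae_restrict_mem measurableSet_Ioo
        filter_upwards [hae] with s hs
        obtain ⟨hda, hD, -⟩ := hDpiece i s hs
        have hnb : Icc (x i.castSucc) (x i.succ) ∈ nhds s := Icc_mem_nhds hs.1 hs.2
        rw [derivWithin_of_mem_nhds hnb, ← hD]
      have hsub : Icc (0:ℝ) 1 ⊆ ⋃ i : Fin n, Icc (x i.castSucc) (x i.succ) := by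
        intro t ht
        obtain ⟨i, hi⟩ := hcoverIcc t ht
        exact mem_iUnion.2 ⟨i, hi⟩
      exact (integrableOn_finite_iUnion.2 hpiece).mono_set hsub
    -- right derivatives
    have hdR1 : ∀ s ∈ Ico (0:ℝ) 1, HasDerivWithinAt f (dR s) (Ioi s) s := by
      intro s hs
      obtain ⟨i, hia, hib⟩ := hcover s hs
      have hd : DifferentiableWithinAt ℝ f (Icc (x i.castSucc) (x i.succ)) s :=
        (hxc2 i).differentiableOn two_ne_zero s ⟨hia, hib.le⟩
      have h1 : HasDerivWithinAt f (derivWithin f (Icc (x i.castSucc) (x i.succ)) s)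
          (Icc (x i.castSucc) (x i.succ)) s := hd.hasDerivWithinAt
      have hs1 : s < 1 := hs.2
      have hmem : Icc (x i.castSucc) (x i.succ) ∈ nhdsWithin s (Icc s 1) := by
        have h2 : Iio (x i.succ) ∈ nhdsWithin s (Icc s 1) :=
          nhdsWithin_le_nhds (Iio_mem_nhds hib)
        filter_upwards [h2, self_mem_nhdsWithin] with y hy1 hy2
        exact ⟨le_trans hia hy2.1, hy1.le⟩
      have h2 : HasDerivWithinAt f (derivWithin f (Icc (x i.castSucc) (x i.succ)) s)
          (Icc s 1) s := h1.mono_of_mem_nhdsWithin hmem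
      have h3 : dR s = derivWithin f (Icc (x i.castSucc) (x i.succ)) s :=
        h2.derivWithin ((uniqueDiffOn_Icc hs1).uniqueDiffWithinAt (left_mem_Icc.2 hs1.le))
      have hmem2 : Icc s 1 ∈ nhdsWithin s (Ioi s) := by
        filter_upwards [nhdsWithin_le_nhds (Iio_mem_nhds hs1), self_mem_nhdsWithin]
          with y hy1 hy2
        exact ⟨le_of_lt hy2, hy1.le⟩
      rw [h3]
      exact h2.mono_of_mem_nhdsWithin hmem2
    have hdR2 : ∀ s ∈ Ioo (0:ℝ) 1, s ∉ Set.range x → dR s = D s := by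
      intro s hs hsx
      obtain ⟨i, hia, hib⟩ := hcover s ⟨hs.1.le, hs.2⟩
      have hia' : x i.castSucc < s :=
        lt_of_le_of_ne hia (fun h => hsx ⟨i.castSucc, h⟩)
      obtain ⟨-, hD, hdr⟩ := hDpiece i s ⟨hia', hib⟩
      rw [hdr, hD]
    -- stage 1
    have key1 : ∀ t ∈ Icc (0:ℝ) 1,
        sq * (2/(2+p)) * (f t) ^ ((2+p)/2) ≤ ∫ s in (0:ℝ)..t, ((1/2) * D s ^ 2 + m*β*u s) := by
      intro t ht
      set φ : ℝ → ℝ := fun s =>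
        if s ∈ Set.range x then sq * ((f s) ^ (p/2) * dR s) else (1/2) * D s ^ 2 + m*β*u s
        with hφdef
      have hφae : (fun s => (1/2) * D s ^ 2 + m*β*u s) =ᵐ[volume] φ := by
        have hae0 : ∀ᵐ s ∂(volume : Measure ℝ), s ∉ Set.range x := by
          rw [ae_iff]
          simp only [not_not]
          exact (Set.finite_range x).measure_zero _
        filter_upwards [hae0] with s hsx
        simp only [hφdef, if_neg hsx]
      have hφint : IntegrableOn φ (Icc (0:ℝ) t) := by
        have h0 : IntegrableOn (fun s => (1/2) * D s ^ 2 + m*β*u s) (Icc (0:ℝ) 1) :=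
          (hD2int.const_mul (1/2:ℝ)).add (huint.const_mul (m*β))
        have h1 : IntegrableOn (fun s => (1/2) * D s ^ 2 + m*β*u s) (Icc (0:ℝ) t) :=
          h0.mono_set (Icc_subset_Icc le_rfl ht.2)
        exact h1.congr hφae.restrict
      have hGc : ContinuousOn (fun s => sq * (2/(2+p)) * (f s) ^ ((2+p)/2)) (Icc 0 t) :=
        continuousOn_const.mul (((hfc.mono (Icc_subset_Icc le_rfl ht.2)).rpow_const
          (fun _ _ => Or.inr (by positivity))))
      have hderiv : ∀ s ∈ Ioo (0:ℝ) t, HasDerivWithinAt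
          (fun s => sq * (2/(2+p)) * (f s) ^ ((2+p)/2))
          (sq * ((f s) ^ (p/2) * dR s)) (Ioi s) s := by
        intro s hsIoo
        have hs' : s ∈ Ico (0:ℝ) 1 := ⟨hsIoo.1.le, lt_of_lt_of_le hsIoo.2 ht.2⟩
        have hf' := hdR1 s hs'
        have hr : HasDerivAt (fun y : ℝ => y ^ ((2+p)/2))
            (((2+p)/2) * (f s) ^ ((2+p)/2 - 1)) (f s) :=
          Real.hasDerivAt_rpow_const (Or.inr (by linarith))
        have hcomp := (hr.comp_hasDerivWithinAt s hf').const_mul (sq * (2/(2+p)))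
        have heq : sq * (2/(2+p)) * (((2+p)/2) * (f s) ^ ((2+p)/2 - 1) * dR s)
            = sq * ((f s) ^ (p/2) * dR s) := by
          rw [show (2+p)/2 - 1 = p/2 by ring]
          field_simp
        rw [heq] at hcomp
        exact hcomp
      have hφg : ∀ s ∈ Ioo (0:ℝ) t, sq * ((f s) ^ (p/2) * dR s) ≤ φ s := by
        intro s hsIoo
        by_cases hsx : s ∈ Set.range x
        · simp only [hφdef, if_pos hsx]
          exact le_rfl
        · simp only [hφdef, if_neg hsx]
          have hs01 : s ∈ Ioo (0:ℝ) 1 := ⟨hsIoo.1, lt_of_lt_of_le hsIoo.2 ht.2⟩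
          rw [hdR2 s hs01 hsx]
          have hfs : 0 ≤ f s := hnonneg s ⟨hs01.1.le, hs01.2.le⟩
          have h3 : (sq * (f s) ^ (p/2)) ^ 2 = (2*m*β) * u s := by
            rw [mul_pow, hsq2, hudef]
            congr 1
            rw [← Real.rpow_natCast ((f s) ^ (p/2)) 2, ← Real.rpow_mul hfs]
            norm_num
          nlinarith [sq_nonneg (D s - sq * (f s) ^ (p/2)), sq_nonneg (sq * (f s) ^ (p/2))]
      have hFTC := intervalIntegral.sub_le_integral_of_hasDeriv_right_of_le ht.1 hGc hderiv
        hφint hφg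
      have hG0 : sq * (2/(2+p)) * (f 0) ^ ((2+p)/2) = 0 := by
        rw [hf0, Real.zero_rpow (by positivity), mul_zero]
      rw [hG0, sub_zero] at hFTC
      refine hFTC.trans (le_of_eq ?_)
      apply intervalIntegral.integral_congr_ae
      filter_upwards [hφae] with s hsx _
      exact hsx.symm
    have huII : ∀ t ∈ Icc (0:ℝ) 1, IntervalIntegrable u volume 0 t := by
      intro t ht
      have h' : IntegrableOn u (uIcc (0:ℝ) t) := by
        rw [uIcc_of_le ht.1]
        exact huint.mono_set (Icc_subset_Icc le_rfl ht.2)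
      exact h'.intervalIntegrable
    have hD2II : ∀ t ∈ Icc (0:ℝ) 1, IntervalIntegrable (fun s => D s ^ 2) volume 0 t := by
      intro t ht
      have h' : IntegrableOn (fun s => D s ^ 2) (uIcc (0:ℝ) t) := by
        rw [uIcc_of_le ht.1]
        exact hD2int.mono_set (Icc_subset_Icc le_rfl ht.2)
      exact h'.intervalIntegrable
    have key2 : ∀ t ∈ Icc (0:ℝ) 1, (f t) ^ ((2+p)/2) ≤ c * B t := by
      intro t ht
      have h1 := key1 t ht
      have hsplit : ∫ s in (0:ℝ)..t, ((1/2) * D s ^ 2 + m*β*u s)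
          = (1/2) * (∫ s in (0:ℝ)..t, D s ^ 2) + m*β * B t := by
        rw [intervalIntegral.integral_add ((hD2II t ht).const_mul (1/2:ℝ))
          ((huII t ht).const_mul (m*β)), intervalIntegral.integral_const_mul,
          intervalIntegral.integral_const_mul, hBdef]
      have hKeq : (∫ s in (0:ℝ)..t,
          (m * β * |f s| ^ p - (1/2) * (derivWithin f (Icc (0:ℝ) 1) s) ^ 2))
          = m*β*B t - (1/2) * (∫ s in (0:ℝ)..t, D s ^ 2) := by
        have hcongr : ∫ s in (0:ℝ)..t,
            (m * β * |f s| ^ p - (1/2) * (derivWithin f (Icc (0:ℝ) 1) s) ^ 2)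
            = ∫ s in (0:ℝ)..t, (m * β * u s - (1/2) * D s ^ 2) := by
          apply intervalIntegral.integral_congr
          intro s hsm
          rw [uIcc_of_le ht.1] at hsm
          have hfs : 0 ≤ f s := hnonneg s ⟨hsm.1, le_trans hsm.2 ht.2⟩
          simp only [hudef, hDdef, abs_of_nonneg hfs]
        rw [hcongr, intervalIntegral.integral_sub ((huII t ht).const_mul (m*β))
          ((hD2II t ht).const_mul (1/2:ℝ)), intervalIntegral.integral_const_mul,
          intervalIntegral.integral_const_mul, hBdef]
      have hK := hcon t ht
      rw [hKeq] at hK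
      rw [← mul_le_mul_iff_right₀ (show (0:ℝ) < sq * (2/(2+p)) by positivity)]
      calc sq * (2/(2+p)) * (f t ^ ((2+p)/2))
          ≤ ∫ s in (0:ℝ)..t, ((1/2) * D s ^ 2 + m*β*u s) := h1
        _ = (1/2) * (∫ s in (0:ℝ)..t, D s ^ 2) + m*β * B t := hsplit
        _ ≤ m*β*B t + m*β * B t := by linarith
        _ = sq ^ 2 * B t := by rw [hsq2]; ring
        _ = sq * (2/(2+p)) * (c * B t) := by rw [hcdef]; field_simp
    -- stage 2
    have hB0 : B 0 = 0 := intervalIntegral.integral_same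
    have hBnonneg : ∀ t ∈ Icc (0:ℝ) 1, 0 ≤ B t := by
      intro t ht
      rw [hBdef]
      apply intervalIntegral.integral_nonneg ht.1
      intro s hsm
      have hfs : 0 ≤ f s := hnonneg s ⟨hsm.1, le_trans hsm.2 ht.2⟩
      exact Real.rpow_nonneg hfs p
    have hBcont : ContinuousOn B (Icc (0:ℝ) 1) := by
      have := intervalIntegral.continuousOn_primitive_interval'
        (huII 1 ⟨zero_le_one, le_rfl⟩) left_mem_uIcc
      rwa [uIcc_of_le zero_le_one] at this
    have hBderiv : ∀ t ∈ Ioo (0:ℝ) 1, HasDerivAt B (u t) t := by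
      intro t ht
      have hct : ContinuousAt u t :=
        (hucont t ⟨ht.1.le, ht.2.le⟩).continuousAt (Icc_mem_nhds ht.1 ht.2)
      refine intervalIntegral.integral_hasDerivAt_right (huII t ⟨ht.1.le, ht.2.le⟩)
        ⟨Ioo 0 1, Ioo_mem_nhds ht.1 ht.2, ?_⟩ hct
      exact (hucont.mono Ioo_subset_Icc_self).aestronglyMeasurable measurableSet_Ioo
    have key3 : ∀ t ∈ Icc (0:ℝ) 1, B t ^ κ ≤ L * t := by
      intro t ht
      have hεbound : ∀ ε : ℝ, 0 < ε → (ε + B t) ^ κ ≤ ε ^ κ + L * t := by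
        intro ε hε
        set W : ℝ → ℝ := fun r => L * r + ε ^ κ - (ε + B r) ^ κ with hWdef
        have hWc : ContinuousOn W (Icc (0:ℝ) 1) := by
          apply ContinuousOn.sub
          · exact (continuousOn_const.mul continuousOn_id).add continuousOn_const
          · exact ContinuousOn.rpow_const (continuousOn_const.add hBcont)
              (fun r _ => Or.inr hκ.le)
        have hWd : ∀ r ∈ Ioo (0:ℝ) 1,
            HasDerivAt W (L - κ * (ε + B r) ^ (κ-1) * u r) r := by
          intro r hr
          have hεB : (0:ℝ) < ε + B r := by
            have := hBnonneg r ⟨hr.1.le, hr.2.le⟩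
            linarith
          have h1 : HasDerivAt (fun r => ε + B r) (u r) r := (hBderiv r hr).const_add ε
          have h2 : HasDerivAt (fun y : ℝ => y ^ κ) (κ * (ε + B r) ^ (κ-1)) (ε + B r) :=
            Real.hasDerivAt_rpow_const (Or.inl hεB.ne')
          have h3 := h2.comp r h1
          have h4 : HasDerivAt (fun r => L * r + ε ^ κ) L r := by
            simpa using ((hasDerivAt_id r).const_mul L).add_const (ε ^ κ)
          have := h4.sub h3
          exact this
        have hmono : MonotoneOn W (Icc (0:ℝ) 1) := by
          apply monotoneOn_of_deriv_nonneg (convex_Icc 0 1) hWc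
          · intro r hr
            rw [interior_Icc] at hr
            exact (hWd r hr).differentiableAt.differentiableWithinAt
          · intro r hr
            rw [interior_Icc] at hr
            rw [(hWd r hr).deriv]
            have hrI : r ∈ Icc (0:ℝ) 1 := ⟨hr.1.le, hr.2.le⟩
            have hBr := hBnonneg r hrI
            have hεB : (0:ℝ) < ε + B r := by linarith
            have hfr : 0 ≤ f r := hnonneg r hrI
            have hur : u r ≤ (c * (ε + B r)) ^ q := by
              have hexp : (2+p)/2 * q = p := by
                rw [hqdef]; field_simp
              have hu1 : u r = ((f r) ^ ((2+p)/2)) ^ q := by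
                rw [hudef, ← Real.rpow_mul hfr, hexp]
              rw [hu1]
              apply Real.rpow_le_rpow (Real.rpow_nonneg hfr _) ?_ hq0
              exact le_trans (key2 r hrI)
                (mul_le_mul_of_nonneg_left (by linarith) hc.le)
            have hcalc : (ε + B r) ^ (κ-1) * (c * (ε + B r)) ^ q = c ^ q := by
              rw [Real.mul_rpow hc.le hεB.le, ← mul_assoc,
                mul_comm ((ε + B r) ^ (κ-1)), mul_assoc, ← Real.rpow_add hεB]
              rw [show κ - 1 + q = 0 by rw [hκdef, hqdef]; field_simp; ring]
              rw [Real.rpow_zero, mul_one]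
            have hstep : κ * (ε + B r) ^ (κ-1) * u r ≤ L := by
              calc κ * (ε + B r) ^ (κ-1) * u r
                  ≤ κ * (ε + B r) ^ (κ-1) * (c * (ε + B r)) ^ q := by
                    apply mul_le_mul_of_nonneg_left hur
                    exact mul_nonneg hκ.le (Real.rpow_nonneg hεB.le _)
                _ = κ * c ^ q := by rw [mul_assoc, hcalc]
                _ = L := hLdef.symm
            linarith
        have h0W : W 0 = 0 := by
          simp only [hWdef, hB0, add_zero, mul_zero, zero_add, sub_self]
        have := hmono (left_mem_Icc.2 zero_le_one) ht ht.1
        rw [h0W] at this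
        simp only [hWdef] at this
        linarith
      refine le_of_forall_pos_le_add ?_
      intro δ hδ
      have hε := hεbound (δ ^ (1/κ)) (Real.rpow_pos_of_pos hδ _)
      have h1 : B t ^ κ ≤ (δ ^ (1/κ) + B t) ^ κ :=
        Real.rpow_le_rpow (hBnonneg t ht)
          (le_add_of_nonneg_left (Real.rpow_nonneg hδ.le _)) hκ.le
      have h2 : (δ ^ (1/κ)) ^ κ = δ := by
        rw [← Real.rpow_mul hδ.le, show 1/κ * κ = 1 by field_simp, Real.rpow_one]
      linarith
    -- conclusion
    intro s hs
    rcases eq_or_lt_of_le hs.1 with h0 | h0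
    · rw [← h0, hf0]
      rw [show m * β * (0:ℝ) ^ 2 / 2 * (2 - p) ^ 2 = 0 by ring, Real.zero_rpow (by positivity)]
    · have h1 := key2 s hs
      have h2 := key3 s hs
      have hfs : 0 ≤ f s := hnonneg s hs
      have hBs : 0 ≤ B s := hBnonneg s hs
      have h3 : f s ≤ (c * B s) ^ (2/(2+p)) := by
        have h := Real.rpow_le_rpow (Real.rpow_nonneg hfs _) h1 (by positivity : (0:ℝ) ≤ 2/(2+p))
        rwa [← Real.rpow_mul hfs, show (2+p)/2 * (2/(2+p)) = 1 by field_simp, Real.rpow_one] at h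
      have h4 : B s ≤ (L * s) ^ (1/κ) := by
        have h := Real.rpow_le_rpow (Real.rpow_nonneg hBs _) h2 (by positivity : (0:ℝ) ≤ 1/κ)
        rwa [← Real.rpow_mul hBs, show κ * (1/κ) = 1 by field_simp, Real.rpow_one] at h
      have h5 : f s ≤ (c * (L*s) ^ (1/κ)) ^ (2/(2+p)) :=
        le_trans h3 (Real.rpow_le_rpow (by positivity)
          (mul_le_mul_of_nonneg_left h4 hc.le) (by positivity))
      have hkc : κ * c = (2-p)/2 * sq := by
        rw [hκdef, hcdef]; field_simp
      have hbase : m * β * s ^ 2 / 2 * (2 - p) ^ 2 = (κ*c*s) ^ (2:ℕ) := by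
        have : (κ*c*s) ^ (2:ℕ) = ((2-p)/2) ^ 2 * sq ^ 2 * s ^ 2 := by
          rw [show κ*c*s = ((2-p)/2*sq)*s by rw [← hkc]]; ring
        rw [this, hsq2]; ring
      have hEq : (c * (L*s) ^ (1/κ)) ^ (2/(2+p)) = (κ*c*s) ^ (2/(2-p)) := by
        have hcq : (0:ℝ) ≤ c ^ q := (Real.rpow_nonneg hc.le q)
        have hstep1 : (L*s) ^ (1/κ) = κ ^ (1/κ) * c ^ (q*(1/κ)) * s ^ (1/κ) := by
          rw [hLdef, Real.mul_rpow (mul_nonneg hκ.le hcq) h0.le,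
            Real.mul_rpow hκ.le hcq, ← Real.rpow_mul hc.le]
        have hstep2 : c * (L*s) ^ (1/κ) = κ ^ (1/κ) * c ^ (1 + q*(1/κ)) * s ^ (1/κ) := by
          rw [hstep1, Real.rpow_add hc, Real.rpow_one]
          ring
        have hstep3 : (c * (L*s) ^ (1/κ)) ^ (2/(2+p))
            = (κ ^ (1/κ)) ^ (2/(2+p)) * (c ^ (1 + q*(1/κ))) ^ (2/(2+p))
              * (s ^ (1/κ)) ^ (2/(2+p)) := by
          rw [hstep2, Real.mul_rpow (mul_nonneg (Real.rpow_nonneg hκ.le _)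
            (Real.rpow_nonneg hc.le _)) (Real.rpow_nonneg h0.le _),
            Real.mul_rpow (Real.rpow_nonneg hκ.le _) (Real.rpow_nonneg hc.le _)]
        have e1 : 1/κ * (2/(2+p)) = 2/(2-p) := by
          rw [hκdef]; field_simp
        have e2 : (1 + q*(1/κ)) * (2/(2+p)) = 2/(2-p) := by
          rw [hqdef, hκdef]; field_simp; ring
        rw [hstep3, ← Real.rpow_mul hκ.le, ← Real.rpow_mul hc.le,
          ← Real.rpow_mul h0.le, e1, e2,
          ← Real.mul_rpow hκ.le hc.le, ← Real.mul_rpow (mul_nonneg hκ.le hc.le) h0.le]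
      have hR : (m * β * s ^ 2 / 2 * (2 - p) ^ 2) ^ ((1:ℝ) / (2 - p)) = (κ*c*s) ^ (2/(2-p)) := by
        rw [hbase, ← Real.rpow_natCast (κ*c*s) 2, ← Real.rpow_mul (by positivity)]
        norm_num [div_eq_mul_inv]
      rw [hR]
      exact hEq ▸ h5

  intro s hs
  exact hgoal s hs
end
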